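/- arXiv:1812.08074 — 9 statements merged into one kernel-verified Lean document; each statement's English description precedes it below -/
import Mathlib

section
/- Let X ∈ m_i and Y ∈ m_j with i ≠ j be Q-orthonormal vectors. Then K(X,Y) = Σ_{k=1}^{ℓ} [(λ_i² + λ_j² − 3λ_k² − 2λ_iλ_j + 2λ_iλ_k + 2λ_jλ_k)/(4 λ_i λ_j λ_k)] · |⁅X,Y⁆_{m_k}|²_Q. -/
open scoped RealInnerProductSpace

variable {𝔤 : Type*} [NormedAddCommGroup 𝔤] [InnerProductSpace ℝ 𝔤] [FiniteDimensional ℝ 𝔤]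

/-- The invariant metric `g` on `m = 𝔥ᗮ` determined by the orthogonal decomposition
`m = m_1 ⊕ ⋯ ⊕ m_ℓ` and the positive coefficients `λ_i`:  `g(X,Y) = λ_i Q(X,Y)` for
`X, Y ∈ m_i` and `g(m_i, m_j) = 0` for `i ≠ j`. -/
noncomputable def gmet {ℓ : ℕ} (m : Fin ℓ → Submodule ℝ 𝔤) (lam : Fin ℓ → ℝ) (x y : 𝔤) : ℝ :=
  ∑ i, lam i * ⟪(Submodule.orthogonalProjectionOnto (m i) x : 𝔤), (Submodule.orthogonalProjectionOnto (m i) y : 𝔤)⟫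

/-- The sectional curvature expression `K(X,Y)` for `X ∈ m_i`, `Y ∈ m_j`:
with `X̃ = X/√λ_i`, `Ỹ = Y/√λ_j`,
`K(X,Y) = −(3/4)|⁅X̃,Ỹ⁆_m|²_g − (1/2) g(⁅X̃,⁅X̃,Ỹ⁆⁆_m, Ỹ) − (1/2) g(⁅Ỹ,⁅Ỹ,X̃⁆⁆_m, X̃)
  + |U(X̃,Ỹ)|²_g − g(U(X̃,X̃), U(Ỹ,Ỹ))`. -/
noncomputable def Kcurv {ℓ : ℕ} (𝔥 : Submodule ℝ 𝔤) (m : Fin ℓ → Submodule ℝ 𝔤)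
    (lam : Fin ℓ → ℝ) (L : 𝔤 →ₗ[ℝ] 𝔤 →ₗ[ℝ] 𝔤) (U : 𝔤 → 𝔤 → 𝔤) (i j : Fin ℓ) (X Y : 𝔤) : ℝ :=
  let Xt := (Real.sqrt (lam i))⁻¹ • X;
  let Yt := (Real.sqrt (lam j))⁻¹ • Y;
  let Pm : 𝔤 → 𝔤 := (fun z => (Submodule.orthogonalProjectionOnto 𝔥ᗮ z : 𝔤));
  -(3/4) * gmet m lam (Pm (L Xt Yt)) (Pm (L Xt Yt))
    - (1/2) * gmet m lam (Pm (L Xt (L Xt Yt))) Yt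
    - (1/2) * gmet m lam (Pm (L Yt (L Yt Xt))) Xt
    + gmet m lam (U Xt Yt) (U Xt Yt)
    - gmet m lam (U Xt Xt) (U Yt Yt)


/-! Write `B = ⁅X,Y⁆` and `B_k` for its `m_k`-component. Since `ad 𝔥` preserves `m_i` and
`m_i ⟂ m_j`, ad-invariance puts `B` in `m`, so `B = Σ B_k`. Ad-invariance also turns the two
double-bracket terms into multiples of `|B|²_Q = Σ |B_k|²_Q`. Testing the identity defining `U`
against `z ∈ m` gives `2 g(U(x,y), z) = (λ_j - λ_i) Q(z, ⁅x,y⁆)` for `x ∈ m_i`, `y ∈ m_j`. With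
`x, y` in the same `m_i` this vanishes, which kills `g(U(X̃,X̃), U(Ỹ,Ỹ))`; with `z = B_k` it
computes the components of `U(X̃,Ỹ)`, whence `|U(X̃,Ỹ)|²_g` is a combination of the `|B_k|²_Q`.
Collecting coefficients gives the formula. -/

open Submodule

noncomputable def curvatureForm {ℓ : ℕ} (𝔥 : Submodule ℝ 𝔤) (m : Fin ℓ → Submodule ℝ 𝔤)
    (lam : Fin ℓ → ℝ) (L : 𝔤 →ₗ[ℝ] 𝔤 →ₗ[ℝ] 𝔤) (U : 𝔤 → 𝔤 → 𝔤) (x y : 𝔤) : ℝ :=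
  -(3/4) * gmet m lam (𝔥ᗮ.starProjection (L x y)) (𝔥ᗮ.starProjection (L x y))
    - (1/2) * gmet m lam (𝔥ᗮ.starProjection (L x (L x y))) y
    - (1/2) * gmet m lam (𝔥ᗮ.starProjection (L y (L y x))) x
    + gmet m lam (U x y) (U x y)
    - gmet m lam (U x x) (U y y)

theorem Kcurv_eq_curvatureForm {ℓ : ℕ} {m : Fin ℓ → Submodule ℝ 𝔤} {lam : Fin ℓ → ℝ}
    (𝔥 : Submodule ℝ 𝔤) (L : 𝔤 →ₗ[ℝ] 𝔤 →ₗ[ℝ] 𝔤) (U : 𝔤 → 𝔤 → 𝔤) (i j : Fin ℓ) (X Y : 𝔤) :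
    Kcurv 𝔥 m lam L U i j X Y =
      curvatureForm 𝔥 m lam L U ((√(lam i))⁻¹ • X) ((√(lam j))⁻¹ • Y) :=
  rfl

section Bracket

variable {E : Type*} [NormedAddCommGroup E] [InnerProductSpace ℝ E] {L : E →ₗ[ℝ] E →ₗ[ℝ] E}

theorem inner_bracket_assoc (halt : L.IsAlt) (had : ∀ x y z : E, ⟪L x y, z⟫ + ⟪y, L x z⟫ = 0)
    (a x y : E) : ⟪L a x, y⟫ = ⟪a, L x y⟫ := by
  rw [← halt.neg x a, inner_neg_left]
  linarith [had x a y]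

theorem inner_bracket_bracket_self (had : ∀ x y z : E, ⟪L x y, z⟫ + ⟪y, L x z⟫ = 0) (x y : E) :
    ⟪L x (L x y), y⟫ = -‖L x y‖ ^ 2 := by
  rw [← real_inner_self_eq_norm_sq]
  linarith [had x (L x y) y]

theorem bracket_mem_orthogonal_of_ne (halt : L.IsAlt)
    (had : ∀ x y z : E, ⟪L x y, z⟫ + ⟪y, L x z⟫ = 0) {ι : Type*} {m : ι → Submodule ℝ E}
    (hm : OrthogonalFamily ℝ (fun k => ↥(m k)) fun k => (m k).subtypeₗᵢ) {𝔥 : Submodule ℝ E}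
    (hm_inv : ∀ i, ∀ h ∈ 𝔥, ∀ x ∈ m i, L h x ∈ m i) {i j : ι} (hij : i ≠ j) {x y : E}
    (hx : x ∈ m i) (hy : y ∈ m j) : L x y ∈ 𝔥ᗮ := by
  rw [mem_orthogonal]
  intro h hh
  rw [← inner_bracket_assoc halt had]
  exact (hm.isOrtho hij).inner_eq (hm_inv i h hh x hx) hy

end Bracket

section Projection

variable {E : Type*} [NormedAddCommGroup E] [InnerProductSpace ℝ E]

theorem inner_starProjection_self (K : Submodule ℝ E) [K.HasOrthogonalProjection] (v : E) :
    ⟪v, K.starProjection v⟫ = ‖K.starProjection v‖ ^ 2 := by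
  rw [← real_inner_self_eq_norm_sq, inner_starProjection_left_eq_right,
    starProjection_eq_self_iff.2 (K.starProjection_apply_mem v)]

theorem OrthogonalFamily.inner_eq_sum_inner_starProjection {ι : Type*} [Fintype ι]
    {V : ι → Submodule ℝ E} [∀ i, CompleteSpace (V i)]
    (hV : OrthogonalFamily ℝ (fun i => ↥(V i)) fun i => (V i).subtypeₗᵢ)
    {v : E} (hv : v ∈ iSup V) (u : E) : ⟪u, v⟫ = ∑ i, ⟪u, (V i).starProjection v⟫ := by
  conv_lhs => rw [← hV.sum_projection_of_mem_iSup v hv]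
  exact _root_.inner_sum _ _ _

end Projection

section ReductiveDecomposition

variable {ℓ : ℕ} {m : Fin ℓ → Submodule ℝ 𝔤} {lam : Fin ℓ → ℝ}

theorem gmet_self (v : 𝔤) : gmet m lam v v = ∑ k, lam k * ‖(m k).starProjection v‖ ^ 2 := by
  simp only [gmet, ← starProjection_apply, real_inner_self_eq_norm_sq]

theorem gmet_of_mem_right
    (hm : OrthogonalFamily ℝ (fun k => ↥(m k)) fun k => (m k).subtypeₗᵢ)
    {k : Fin ℓ} {y : 𝔤} (hy : y ∈ m k) (u : 𝔤) : gmet m lam u y = lam k * ⟪u, y⟫ := by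
  simp only [gmet, ← starProjection_apply]
  rw [Finset.sum_eq_single_of_mem k (Finset.mem_univ k) fun k' _ hk' => ?_,
    inner_starProjection_left_eq_right, starProjection_eq_self_iff.2 hy,
    starProjection_eq_self_iff.2 hy]
  rw [(starProjection_apply_eq_zero_iff _).2 ((hm.isOrtho hk'.symm).le hy), inner_zero_right,
    mul_zero]

variable {L : 𝔤 →ₗ[ℝ] 𝔤 →ₗ[ℝ] 𝔤} {𝔥 : Submodule ℝ 𝔤} {U : 𝔤 → 𝔤 → 𝔤} {i j : Fin ℓ} {x y : 𝔤}

theorem gmet_starProjection_of_mem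
    (hm : OrthogonalFamily ℝ (fun k => ↥(m k)) fun k => (m k).subtypeₗᵢ)
    (hm_le : ∀ k, m k ≤ 𝔥ᗮ) {k : Fin ℓ} (hy : y ∈ m k) (v : 𝔤) :
    gmet m lam (𝔥ᗮ.starProjection v) y = lam k * ⟪v, y⟫ := by
  rw [gmet_of_mem_right hm hy, inner_starProjection_left_eq_right,
    starProjection_eq_self_iff.2 (hm_le k hy)]

theorem two_mul_gmet_U_eq (halt : L.IsAlt) (had : ∀ x y z : 𝔤, ⟪L x y, z⟫ + ⟪y, L x z⟫ = 0)
    (hm : OrthogonalFamily ℝ (fun k => ↥(m k)) fun k => (m k).subtypeₗᵢ) (hm_le : ∀ k, m k ≤ 𝔥ᗮ)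
    (hU : ∀ x ∈ 𝔥ᗮ, ∀ y ∈ 𝔥ᗮ, ∀ z ∈ 𝔥ᗮ, 2 * gmet m lam (U x y) z =
      gmet m lam (𝔥ᗮ.starProjection (L z x)) y + gmet m lam (𝔥ᗮ.starProjection (L z y)) x)
    (hx : x ∈ m i) (hy : y ∈ m j) {z : 𝔤} (hz : z ∈ 𝔥ᗮ) :
    2 * gmet m lam (U x y) z = (lam j - lam i) * ⟪z, L x y⟫ := by
  rw [hU x (hm_le i hx) y (hm_le j hy) z hz, gmet_starProjection_of_mem hm hm_le hy,
    gmet_starProjection_of_mem hm hm_le hx, inner_bracket_assoc halt had,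
    inner_bracket_assoc halt had, ← halt.neg x y, inner_neg_right]
  ring

theorem gmet_U_self_eq_sum (halt : L.IsAlt) (had : ∀ x y z : 𝔤, ⟪L x y, z⟫ + ⟪y, L x z⟫ = 0)
    (hm : OrthogonalFamily ℝ (fun k => ↥(m k)) fun k => (m k).subtypeₗᵢ) (hm_le : ∀ k, m k ≤ 𝔥ᗮ)
    (hm_span : (⨆ k, m k) = 𝔥ᗮ) (hlam : ∀ k, 0 < lam k) (hUmem : ∀ x y, U x y ∈ 𝔥ᗮ)
    (hU : ∀ x ∈ 𝔥ᗮ, ∀ y ∈ 𝔥ᗮ, ∀ z ∈ 𝔥ᗮ, 2 * gmet m lam (U x y) z =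
      gmet m lam (𝔥ᗮ.starProjection (L z x)) y + gmet m lam (𝔥ᗮ.starProjection (L z y)) x)
    (hx : x ∈ m i) (hy : y ∈ m j) (hxy : L x y ∈ 𝔥ᗮ) :
    gmet m lam (U x y) (U x y) =
      ∑ k, (lam j - lam i) ^ 2 / (4 * lam k) * ‖(m k).starProjection (L x y)‖ ^ 2 := by
  have hcomponent (k : Fin ℓ) : ⟪U x y, (m k).starProjection (L x y)⟫ =
      (lam j - lam i) / (2 * lam k) * ‖(m k).starProjection (L x y)‖ ^ 2 := by
    have hP := (m k).starProjection_apply_mem (L x y)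
    have h := two_mul_gmet_U_eq halt had hm hm_le hU hx hy (hm_le k hP)
    rw [gmet_of_mem_right hm hP, real_inner_comm (L x y), inner_starProjection_self] at h
    have := (hlam k).ne'
    field_simp
    linarith
  have hself := two_mul_gmet_U_eq halt had hm hm_le hU hx hy (hUmem x y)
  rw [hm.inner_eq_sum_inner_starProjection (by rwa [hm_span])] at hself
  calc gmet m lam (U x y) (U x y)
      = ∑ k, (lam j - lam i) / 2 * ⟪U x y, (m k).starProjection (L x y)⟫ := by
        rw [← Finset.mul_sum]; linarith
    _ = _ := Finset.sum_congr rfl fun k _ => by rw [hcomponent]; ring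

theorem curvatureForm_eq_sum (halt : L.IsAlt) (had : ∀ x y z : 𝔤, ⟪L x y, z⟫ + ⟪y, L x z⟫ = 0)
    (hm : OrthogonalFamily ℝ (fun k => ↥(m k)) fun k => (m k).subtypeₗᵢ) (hm_le : ∀ k, m k ≤ 𝔥ᗮ)
    (hm_span : (⨆ k, m k) = 𝔥ᗮ) (hm_inv : ∀ i, ∀ h ∈ 𝔥, ∀ x ∈ m i, L h x ∈ m i)
    (hlam : ∀ k, 0 < lam k) (hUmem : ∀ x y, U x y ∈ 𝔥ᗮ)
    (hU : ∀ x ∈ 𝔥ᗮ, ∀ y ∈ 𝔥ᗮ, ∀ z ∈ 𝔥ᗮ, 2 * gmet m lam (U x y) z =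
      gmet m lam (𝔥ᗮ.starProjection (L z x)) y + gmet m lam (𝔥ᗮ.starProjection (L z y)) x)
    (hij : i ≠ j) (hx : x ∈ m i) (hy : y ∈ m j) :
    curvatureForm 𝔥 m lam L U x y =
      ∑ k, (lam i ^ 2 + lam j ^ 2 - 3 * lam k ^ 2 - 2 * lam i * lam j
        + 2 * lam i * lam k + 2 * lam j * lam k) / (4 * lam k) *
        ‖(m k).starProjection (L x y)‖ ^ 2 := by
  have hxy := bracket_mem_orthogonal_of_ne halt had hm hm_inv hij hx hy
  have hnorm : ‖L x y‖ ^ 2 = ∑ k, ‖(m k).starProjection (L x y)‖ ^ 2 := by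
    rw [← real_inner_self_eq_norm_sq, hm.inner_eq_sum_inner_starProjection (by rwa [hm_span])]
    simp only [inner_starProjection_self]
  have hxxy : gmet m lam (𝔥ᗮ.starProjection (L x (L x y))) y = -(lam j * ‖L x y‖ ^ 2) := by
    rw [gmet_starProjection_of_mem hm hm_le hy, inner_bracket_bracket_self had, mul_neg]
  have hyyx : gmet m lam (𝔥ᗮ.starProjection (L y (L y x))) x = -(lam i * ‖L x y‖ ^ 2) := by
    rw [gmet_starProjection_of_mem hm hm_le hx, inner_bracket_bracket_self had, ← halt.neg x y,
      norm_neg, mul_neg]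
  have hUU : gmet m lam (U x x) (U y y) = 0 := by
    have h := two_mul_gmet_U_eq halt had hm hm_le hU hx hx (hUmem y y)
    rw [sub_self, zero_mul] at h
    linarith
  rw [curvatureForm, starProjection_eq_self_iff.2 hxy, gmet_self, hxxy, hyyx,
    gmet_U_self_eq_sum halt had hm hm_le hm_span hlam hUmem hU hx hy hxy, hUU, hnorm]
  simp only [Finset.mul_sum, ← Finset.sum_neg_distrib, ← Finset.sum_sub_distrib,
    ← Finset.sum_add_distrib, sub_zero]
  refine Finset.sum_congr rfl fun k _ => ?_
  have := (hlam k).ne'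
  field_simp
  ring

end ReductiveDecomposition

theorem sec_curvature_formula_offdiag_general {ℓ : ℕ}
    -- 𝔤 is a real Lie algebra with bracket L …
    (L : 𝔤 →ₗ[ℝ] 𝔤 →ₗ[ℝ] 𝔤)
    (halt : ∀ x : 𝔤, L x x = 0)
    -- … whose inner product Q is ad-invariant
    (had : ∀ x y z : 𝔤, ⟪L x y, z⟫ + ⟪y, L x z⟫ = 0)
    -- 𝔥 ⊆ 𝔤 is a Lie subalgebra, m := 𝔥ᗮ
    (𝔥 : Submodule ℝ 𝔤)
    -- m = m_1 ⊕ ⋯ ⊕ m_ℓ, pairwise Q-orthogonal, with ⁅𝔥, m_i⁆ ⊆ m_i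
    (m : Fin ℓ → Submodule ℝ 𝔤)
    (hm_le : ∀ i, m i ≤ 𝔥ᗮ)
    (hm_orth : ∀ i j, i ≠ j → ∀ x ∈ m i, ∀ y ∈ m j, ⟪x, y⟫ = 0)
    (hm_span : (⨆ i, m i) = 𝔥ᗮ)
    (hm_inv : ∀ i, ∀ h ∈ 𝔥, ∀ x ∈ m i, L h x ∈ m i)
    -- the positive coefficients λ_i
    (lam : Fin ℓ → ℝ) (hlam : ∀ i, 0 < lam i)
    -- U is the symmetric bilinear map on m determined by
    -- 2 g(U(X,Y), Z) = g(⁅Z,X⁆_m, Y) + g(⁅Z,Y⁆_m, X) for all Z ∈ m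
    (U : 𝔤 → 𝔤 → 𝔤)
    (hUmem : ∀ x y, U x y ∈ 𝔥ᗮ)
    (hU : ∀ x ∈ 𝔥ᗮ, ∀ y ∈ 𝔥ᗮ, ∀ z ∈ 𝔥ᗮ,
      2 * gmet m lam (U x y) z =
        gmet m lam ((Submodule.orthogonalProjectionOnto 𝔥ᗮ (L z x) : 𝔤)) y +
        gmet m lam ((Submodule.orthogonalProjectionOnto 𝔥ᗮ (L z y) : 𝔤)) x)
    -- X ∈ m_i, Y ∈ m_j, i ≠ j, Q-orthonormal
    (i j : Fin ℓ) (hij : i ≠ j) (X Y : 𝔤) (hX : X ∈ m i) (hY : Y ∈ m j) :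
    Kcurv 𝔥 m lam L U i j X Y =
      ∑ k, ((lam i ^ 2 + lam j ^ 2 - 3 * lam k ^ 2 - 2 * lam i * lam j
              + 2 * lam i * lam k + 2 * lam j * lam k) / (4 * lam i * lam j * lam k)) *
        ‖(Submodule.orthogonalProjectionOnto (m k) (L X Y) : 𝔤)‖ ^ 2 := by
  have hm : OrthogonalFamily ℝ (fun k => ↥(m k)) fun k => (m k).subtypeₗᵢ :=
    OrthogonalFamily.of_pairwise fun k k' hkk' => isOrtho_iff_inner_eq.2 (hm_orth k k' hkk')
  set s := (√(lam i))⁻¹ * (√(lam j))⁻¹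
  have hs : s ^ 2 = (lam i * lam j)⁻¹ := by
    rw [mul_pow, inv_pow, inv_pow, Real.sq_sqrt (hlam i).le, Real.sq_sqrt (hlam j).le, mul_inv]
  have hbracket : L ((√(lam i))⁻¹ • X) ((√(lam j))⁻¹ • Y) = s • L X Y := by
    rw [LinearMap.map_smul₂, map_smul, smul_smul]
  rw [Kcurv_eq_curvatureForm, curvatureForm_eq_sum halt had hm hm_le hm_span hm_inv hlam hUmem hU
    hij (smul_mem _ _ hX) (smul_mem _ _ hY), hbracket]
  refine Finset.sum_congr rfl fun k _ => ?_
  have := (hlam i).ne'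
  have := (hlam j).ne'
  rw [map_smul, norm_smul, mul_pow, Real.norm_eq_abs, sq_abs, hs, starProjection_apply]
  field_simp

/-- For `Q`-orthonormal vectors `X ∈ m_i`, `Y ∈ m_j` with `i ≠ j`,
`K(X,Y) = Σ_k (λ_i² + λ_j² − 3λ_k² − 2λ_iλ_j + 2λ_iλ_k + 2λ_jλ_k)/(4λ_iλ_jλ_k) · |⁅X,Y⁆_{m_k}|²_Q`. -/
theorem sec_curvature_formula_offdiag {ℓ : ℕ}
    -- 𝔤 is a real Lie algebra with bracket L …
    (L : 𝔤 →ₗ[ℝ] 𝔤 →ₗ[ℝ] 𝔤)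
    (halt : ∀ x : 𝔤, L x x = 0)
    (hjac : ∀ x y z : 𝔤, L x (L y z) + L y (L z x) + L z (L x y) = 0)
    -- … whose inner product Q is ad-invariant
    (had : ∀ x y z : 𝔤, ⟪L x y, z⟫ + ⟪y, L x z⟫ = 0)
    -- 𝔥 ⊆ 𝔤 is a Lie subalgebra, m := 𝔥ᗮ
    (𝔥 : Submodule ℝ 𝔤) (h𝔥 : ∀ x ∈ 𝔥, ∀ y ∈ 𝔥, L x y ∈ 𝔥)
    -- m = m_1 ⊕ ⋯ ⊕ m_ℓ, pairwise Q-orthogonal, with ⁅𝔥, m_i⁆ ⊆ m_i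
    (m : Fin ℓ → Submodule ℝ 𝔤)
    (hm_le : ∀ i, m i ≤ 𝔥ᗮ)
    (hm_orth : ∀ i j, i ≠ j → ∀ x ∈ m i, ∀ y ∈ m j, ⟪x, y⟫ = 0)
    (hm_span : (⨆ i, m i) = 𝔥ᗮ)
    (hm_inv : ∀ i, ∀ h ∈ 𝔥, ∀ x ∈ m i, L h x ∈ m i)
    -- the positive coefficients λ_i
    (lam : Fin ℓ → ℝ) (hlam : ∀ i, 0 < lam i)
    -- U is the symmetric bilinear map on m determined by
    -- 2 g(U(X,Y), Z) = g(⁅Z,X⁆_m, Y) + g(⁅Z,Y⁆_m, X) for all Z ∈ m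
    (U : 𝔤 → 𝔤 → 𝔤)
    (hUmem : ∀ x y, U x y ∈ 𝔥ᗮ)
    (hUsymm : ∀ x y, U x y = U y x)
    (hU : ∀ x ∈ 𝔥ᗮ, ∀ y ∈ 𝔥ᗮ, ∀ z ∈ 𝔥ᗮ,
      2 * gmet m lam (U x y) z =
        gmet m lam ((Submodule.orthogonalProjectionOnto 𝔥ᗮ (L z x) : 𝔤)) y +
        gmet m lam ((Submodule.orthogonalProjectionOnto 𝔥ᗮ (L z y) : 𝔤)) x)
    -- X ∈ m_i, Y ∈ m_j, i ≠ j, Q-orthonormal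
    (i j : Fin ℓ) (hij : i ≠ j) (X Y : 𝔤) (hX : X ∈ m i) (hY : Y ∈ m j)
    (hXnorm : ‖X‖ = 1) (hYnorm : ‖Y‖ = 1) :
    Kcurv 𝔥 m lam L U i j X Y =
      ∑ k, ((lam i ^ 2 + lam j ^ 2 - 3 * lam k ^ 2 - 2 * lam i * lam j
              + 2 * lam i * lam k + 2 * lam j * lam k) / (4 * lam i * lam j * lam k)) *
        ‖(Submodule.orthogonalProjectionOnto (m k) (L X Y) : 𝔤)‖ ^ 2 :=
  sec_curvature_formula_offdiag_general L halt had 𝔥 m hm_le hm_orth hm_span hm_inv lam hlam U hUmem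
    hU i j hij X Y hX hY
end

section
/- Let 𝔥 ⊆ 𝔤 be a Lie subalgebra, and let m_i and m_j be Q-orthogonal subspaces of 𝔥^⊥ with ⁅𝔥, m_i⁆ ⊆ m_i and ⁅𝔥, m_j⁆ ⊆ m_j. Let (z_γ) be a Q-orthonormal basis of 𝔥 and suppose the Casimir operator C := −Σ_γ ad(z_γ) ∘ ad(z_γ) acts on m_i as the scalar c_i, i.e. C(X) = c_i X for all X ∈ m_i. Then for any Q-orthonormal bases (e_α) of m_i and (f_β) of m_j: Σ_{α,α'} |⁅e_α, e_{α'}⁆_𝔥|²_Q = (dim m_i)·c_i, and Σ_{α,β} |⁅e_α, f_β⁆_𝔥|²_Q = 0. -/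
/-!
By ad-invariance, `⟪z_γ, ⁅x, y⁆⟫ = ⟪⁅z_γ, x⁆, y⟫`, so the 𝔥-component of `⁅x, y⁆` is read off from
the brackets `⁅z_γ, x⁆`. For `x ∈ m_i` these lie in `m_i`, which is orthogonal to `m_j`; this gives
the second sum. Expanding them in the basis `(e_α)` turns the first sum into
`Σ_α Σ_γ ‖⁅z_γ, e_α⁆‖² = Σ_α ⟪e_α, C e_α⟫ = (dim m_i) · c_i`.
-/

open scoped RealInnerProductSpace

variable {𝔤 : Type*} [NormedAddCommGroup 𝔤] [InnerProductSpace ℝ 𝔤] [FiniteDimensional ℝ 𝔤]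

section OrthonormalFamily

variable {ι E : Type*} [Fintype ι] [NormedAddCommGroup E] [InnerProductSpace ℝ E]
  {b : ι → E} {K : Submodule ℝ E}

noncomputable def Orthonormal.basisOfSpanEq (hb : Orthonormal ℝ b)
    (hK : Submodule.span ℝ (Set.range b) = K) : OrthonormalBasis ι ℝ K :=
  OrthonormalBasis.mk (hb.codRestrict K fun i => hK ▸ Submodule.subset_span ⟨i, rfl⟩) (by
    subst hK
    rw [← Submodule.span_span_coe_preimage (s := Set.range b)]
    refine le_of_eq (congrArg _ ?_)
    ext ⟨x, hx⟩
    simp [Set.codRestrict, Subtype.ext_iff])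

@[simp]
theorem Orthonormal.coe_basisOfSpanEq (hb : Orthonormal ℝ b)
    (hK : Submodule.span ℝ (Set.range b) = K) (i : ι) :
    (hb.basisOfSpanEq hK i : E) = b i := by
  rw [Orthonormal.basisOfSpanEq, OrthonormalBasis.coe_mk]
  rfl

theorem Orthonormal.norm_sq_orthogonalProjectionOnto (hb : Orthonormal ℝ b)
    (hK : Submodule.span ℝ (Set.range b) = K) [K.HasOrthogonalProjection] (w : E) :
    ‖(K.orthogonalProjectionOnto w : E)‖ ^ 2 = ∑ i, ⟪b i, w⟫ ^ 2 := by
  rw [← Submodule.coe_norm, ← (hb.basisOfSpanEq hK).sum_sq_inner_right]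
  simp_rw [Submodule.inner_orthogonalProjectionOnto_eq_of_mem_left,
    hb.coe_basisOfSpanEq]

theorem Orthonormal.norm_sq_eq_sum_inner_sq (hb : Orthonormal ℝ b)
    (hK : Submodule.span ℝ (Set.range b) = K) {v : E} (hv : v ∈ K) :
    ‖v‖ ^ 2 = ∑ i, ⟪b i, v⟫ ^ 2 := by
  rw [← Submodule.coe_mk v hv, ← Submodule.coe_norm,
    ← (hb.basisOfSpanEq hK).sum_sq_inner_right]
  simp_rw [Submodule.coe_inner, hb.coe_basisOfSpanEq]

end OrthonormalFamily

section InvariantForm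

variable {E : Type*} [NormedAddCommGroup E] [InnerProductSpace ℝ E] (L : E →ₗ[ℝ] E →ₗ[ℝ] E)

theorem inner_bracket_right_eq_inner_bracket_left (halt : ∀ x, L x x = 0)
    (had : ∀ x y z, ⟪L x y, z⟫ + ⟪y, L x z⟫ = 0) (x y z : E) :
    ⟪z, L x y⟫ = ⟪L z x, y⟫ := by
  have hskew : L x z = -L z x := by
    have h := halt (x + z)
    simp only [map_add, LinearMap.add_apply, halt, add_zero, zero_add] at h
    exact eq_neg_of_add_eq_zero_right h
  have := had x y z
  rw [hskew, inner_neg_right] at this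
  linarith [real_inner_comm z (L x y), real_inner_comm y (L z x)]

theorem sum_norm_sq_bracket_eq_inner_casimir (had : ∀ x y z, ⟪L x y, z⟫ + ⟪y, L x z⟫ = 0)
    {ι : Type*} [Fintype ι] (z : ι → E) (x : E) :
    ∑ γ, ‖L (z γ) x‖ ^ 2 = ⟪x, -∑ γ, L (z γ) (L (z γ) x)⟫ := by
  rw [inner_neg_right, inner_sum, ← Finset.sum_neg_distrib]
  refine Finset.sum_congr rfl fun γ _ => ?_
  rw [← real_inner_self_eq_norm_sq]
  linarith [had (z γ) (L (z γ) x) x, real_inner_comm x (L (z γ) (L (z γ) x))]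

theorem norm_sq_orthogonalProjectionOnto_bracket (halt : ∀ x, L x x = 0)
    (had : ∀ x y z, ⟪L x y, z⟫ + ⟪y, L x z⟫ = 0) {ι : Type*} [Fintype ι] {z : ι → E}
    (hz : Orthonormal ℝ z) {𝔥 : Submodule ℝ E} [𝔥.HasOrthogonalProjection]
    (h𝔥 : Submodule.span ℝ (Set.range z) = 𝔥) (x y : E) :
    ‖(𝔥.orthogonalProjectionOnto (L x y) : E)‖ ^ 2 = ∑ γ, ⟪L (z γ) x, y⟫ ^ 2 := by
  simp_rw [hz.norm_sq_orthogonalProjectionOnto h𝔥,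
    inner_bracket_right_eq_inner_bracket_left L halt had]

end InvariantForm

theorem casimir_bracket_sums_general
    -- 𝔤 is a real Lie algebra with bracket L …
    (L : 𝔤 →ₗ[ℝ] 𝔤 →ₗ[ℝ] 𝔤)
    (halt : ∀ x : 𝔤, L x x = 0)
    -- … whose inner product Q is ad-invariant
    (had : ∀ x y z : 𝔤, ⟪L x y, z⟫ + ⟪y, L x z⟫ = 0)
    -- 𝔥 ⊆ 𝔤 is a Lie subalgebra
    (𝔥 : Submodule ℝ 𝔤)
    -- m_i and m_j are Q-orthogonal subspaces of 𝔥ᗮ, invariant under ⁅𝔥, ·⁆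
    (mi mj : Submodule ℝ 𝔤)
    (horth : ∀ x ∈ mi, ∀ y ∈ mj, ⟪x, y⟫ = 0)
    (hmi_inv : ∀ h ∈ 𝔥, ∀ x ∈ mi, L h x ∈ mi)
    -- (z_γ) is a Q-orthonormal basis of 𝔥
    (p : ℕ) (z : Fin p → 𝔤) (hz_mem : ∀ γ, z γ ∈ 𝔥)
    (hz_span : Submodule.span ℝ (Set.range z) = 𝔥)
    (hz_on : ∀ γ δ, ⟪z γ, z δ⟫ = if γ = δ then 1 else 0)
    -- the Casimir operator C = −Σ_γ ad(z_γ)∘ad(z_γ) acts on m_i as the scalar c_i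
    (ci : ℝ) (hcas : ∀ X ∈ mi, (-∑ γ, L (z γ) (L (z γ) X)) = ci • X)
    -- (e_α) and (f_β) are Q-orthonormal bases of m_i and m_j
    (di dj : ℕ) (e : Fin di → 𝔤) (f : Fin dj → 𝔤)
    (he_mem : ∀ α, e α ∈ mi) (he_span : Submodule.span ℝ (Set.range e) = mi)
    (he_on : ∀ α β, ⟪e α, e β⟫ = if α = β then 1 else 0)
    (hf_mem : ∀ β, f β ∈ mj) :
    (∑ α, ∑ α', ‖(Submodule.orthogonalProjection 𝔥 (L (e α) (e α')) : 𝔤)‖ ^ 2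
        = (Module.finrank ℝ mi : ℝ) * ci) ∧
    (∑ α, ∑ β, ‖(Submodule.orthogonalProjection 𝔥 (L (e α) (f β)) : 𝔤)‖ ^ 2 = 0) := by
  have hz : Orthonormal ℝ z := orthonormal_iff_ite.mpr hz_on
  have he : Orthonormal ℝ e := orthonormal_iff_ite.mpr he_on
  have hbracket := norm_sq_orthogonalProjectionOnto_bracket L halt had hz hz_span
  have hze : ∀ γ α, L (z γ) (e α) ∈ mi := fun γ α => hmi_inv _ (hz_mem γ) _ (he_mem α)
  refine ⟨?_, ?_⟩
  · have hcasimir : ∀ α, ∑ γ, ‖L (z γ) (e α)‖ ^ 2 = ci := fun α => by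
      rw [sum_norm_sq_bracket_eq_inner_casimir L had, hcas _ (he_mem α), real_inner_smul_right,
        real_inner_self_eq_norm_sq, he.1 α, one_pow, mul_one]
    calc _ = ∑ α, ∑ γ, ∑ α', ⟪e α', L (z γ) (e α)⟫ ^ 2 := by
          simp_rw [hbracket, real_inner_comm (e _)]
          exact Finset.sum_congr rfl fun α _ => Finset.sum_comm
      _ = ∑ _α : Fin di, ci := by
          simp_rw [← he.norm_sq_eq_sum_inner_sq he_span (hze _ _), hcasimir]
      _ = (Module.finrank ℝ mi : ℝ) * ci := by
          rw [Finset.sum_const, Finset.card_univ, nsmul_eq_mul, ← he_span,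
            finrank_span_eq_card he.linearIndependent]
  · simp_rw [hbracket, horth _ (hze _ _) _ (hf_mem _)]
    simp

/-- If the Casimir operator `C = −Σ_γ ad(z_γ) ∘ ad(z_γ)` of the
subalgebra `𝔥` acts on `m_i` as the scalar `c_i`, then for any `Q`-orthonormal bases
`(e_α)` of `m_i` and `(f_β)` of `m_j`:
`Σ_{α,α'} |⁅e_α, e_{α'}⁆_𝔥|²_Q = dim(m_i)·c_i` and `Σ_{α,β} |⁅e_α, f_β⁆_𝔥|²_Q = 0`. -/
theorem casimir_bracket_sums
    -- 𝔤 is a real Lie algebra with bracket L …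
    (L : 𝔤 →ₗ[ℝ] 𝔤 →ₗ[ℝ] 𝔤)
    (halt : ∀ x : 𝔤, L x x = 0)
    (hjac : ∀ x y z : 𝔤, L x (L y z) + L y (L z x) + L z (L x y) = 0)
    -- … whose inner product Q is ad-invariant
    (had : ∀ x y z : 𝔤, ⟪L x y, z⟫ + ⟪y, L x z⟫ = 0)
    -- 𝔥 ⊆ 𝔤 is a Lie subalgebra
    (𝔥 : Submodule ℝ 𝔤) (h𝔥 : ∀ x ∈ 𝔥, ∀ y ∈ 𝔥, L x y ∈ 𝔥)
    -- m_i and m_j are Q-orthogonal subspaces of 𝔥ᗮ, invariant under ⁅𝔥, ·⁆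
    (mi mj : Submodule ℝ 𝔤) (hmi : mi ≤ 𝔥ᗮ) (hmj : mj ≤ 𝔥ᗮ)
    (horth : ∀ x ∈ mi, ∀ y ∈ mj, ⟪x, y⟫ = 0)
    (hmi_inv : ∀ h ∈ 𝔥, ∀ x ∈ mi, L h x ∈ mi)
    (hmj_inv : ∀ h ∈ 𝔥, ∀ x ∈ mj, L h x ∈ mj)
    -- (z_γ) is a Q-orthonormal basis of 𝔥
    (p : ℕ) (z : Fin p → 𝔤) (hz_mem : ∀ γ, z γ ∈ 𝔥)
    (hz_span : Submodule.span ℝ (Set.range z) = 𝔥)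
    (hz_on : ∀ γ δ, ⟪z γ, z δ⟫ = if γ = δ then 1 else 0)
    -- the Casimir operator C = −Σ_γ ad(z_γ)∘ad(z_γ) acts on m_i as the scalar c_i
    (ci : ℝ) (hcas : ∀ X ∈ mi, (-∑ γ, L (z γ) (L (z γ) X)) = ci • X)
    -- (e_α) and (f_β) are Q-orthonormal bases of m_i and m_j
    (di dj : ℕ) (e : Fin di → 𝔤) (f : Fin dj → 𝔤)
    (he_mem : ∀ α, e α ∈ mi) (he_span : Submodule.span ℝ (Set.range e) = mi)
    (he_on : ∀ α β, ⟪e α, e β⟫ = if α = β then 1 else 0)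
    (hf_mem : ∀ β, f β ∈ mj) (hf_span : Submodule.span ℝ (Set.range f) = mj)
    (hf_on : ∀ α β, ⟪f α, f β⟫ = if α = β then 1 else 0) :
    (∑ α, ∑ α', ‖(Submodule.orthogonalProjection 𝔥 (L (e α) (e α')) : 𝔤)‖ ^ 2
        = (Module.finrank ℝ mi : ℝ) * ci) ∧
    (∑ α, ∑ β, ‖(Submodule.orthogonalProjection 𝔥 (L (e α) (f β)) : 𝔤)‖ ^ 2 = 0) :=
  casimir_bracket_sums_general L halt had 𝔥 mi mj horth hmi_inv p z hz_mem hz_span hz_on ci hcas di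
    dj e f he_mem he_span he_on hf_mem
end

section
/- Let 𝔨 ⊆ 𝔤 be a Lie subalgebra. Then the set n := { X ∈ 𝔨 : ⁅X, p⁆ = 0 for all p ∈ 𝔨^⊥ } is an ideal of 𝔤 contained in 𝔨. (This is the kernel of the isotropy representation of the reductive pair (𝔤, 𝔨).) -/
/-!
Splitting `y = k + p` with `k ∈ 𝔨` and `p ∈ 𝔨ᗮ`, an element `x` of the kernel satisfies
`⁅p, x⁆ = 0`, so `⁅y, x⁆ = ⁅k, x⁆ ∈ 𝔨`. Ad-invariance of the inner product makes `𝔨ᗮ` stable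
under `ad 𝔨`, and then the Jacobi identity gives
`⁅⁅k, x⁆, p'⁆ = ⁅k, ⁅x, p'⁆⁆ - ⁅x, ⁅k, p'⁆⁆ = 0` for every `p' ∈ 𝔨ᗮ`.
-/

open scoped RealInnerProductSpace

variable {𝔤 : Type*} [NormedAddCommGroup 𝔤] [InnerProductSpace ℝ 𝔤] [FiniteDimensional ℝ 𝔤]

section IsotropyKernel

variable {E : Type*} [NormedAddCommGroup E] [InnerProductSpace ℝ E]
  (L : E →ₗ[ℝ] E →ₗ[ℝ] E) (𝔨 : Submodule ℝ E)

def isotropyKernel : Submodule ℝ E :=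
  𝔨 ⊓ ⨅ p ∈ 𝔨ᗮ, LinearMap.ker (L.flip p)

theorem mem_isotropyKernel {x : E} :
    x ∈ isotropyKernel L 𝔨 ↔ x ∈ 𝔨 ∧ ∀ p ∈ 𝔨ᗮ, L x p = 0 := by
  simp [isotropyKernel]

theorem isotropyKernel_le : isotropyKernel L 𝔨 ≤ 𝔨 := inf_le_left

variable {L 𝔨}

theorem apply_mem_orthogonal_of_mem (had : ∀ x y z : E, ⟪L x y, z⟫ + ⟪y, L x z⟫ = 0)
    (h𝔨 : ∀ x ∈ 𝔨, ∀ y ∈ 𝔨, L x y ∈ 𝔨) {k p : E} (hk : k ∈ 𝔨) (hp : p ∈ 𝔨ᗮ) :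
    L k p ∈ 𝔨ᗮ := by
  intro q hq
  have hkq : ⟪L k q, p⟫ = 0 := hp _ (h𝔨 k hk q hq)
  linarith [had k q p]

theorem apply_eq_zero_of_mem_orthogonal (halt : L.IsAlt) {x p : E}
    (hx : x ∈ isotropyKernel L 𝔨) (hp : p ∈ 𝔨ᗮ) : L p x = 0 :=
  halt.eq_iff.1 (((mem_isotropyKernel L 𝔨).1 hx).2 p hp)

theorem apply_mem_isotropyKernel_of_mem (halt : L.IsAlt)
    (hjac : ∀ x y z : E, L x (L y z) + L y (L z x) + L z (L x y) = 0)
    (had : ∀ x y z : E, ⟪L x y, z⟫ + ⟪y, L x z⟫ = 0) (h𝔨 : ∀ x ∈ 𝔨, ∀ y ∈ 𝔨, L x y ∈ 𝔨)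
    {k x : E} (hk : k ∈ 𝔨) (hx : x ∈ isotropyKernel L 𝔨) : L k x ∈ isotropyKernel L 𝔨 := by
  obtain ⟨hx𝔨, hx_kill⟩ := (mem_isotropyKernel L 𝔨).1 hx
  refine (mem_isotropyKernel L 𝔨).2 ⟨h𝔨 k hk x hx𝔨, fun p hp ↦ ?_⟩
  have hpk : L x (L p k) = 0 := by
    rw [← halt.neg k p, map_neg, hx_kill _ (apply_mem_orthogonal_of_mem had h𝔨 hk hp), neg_zero]
  have hjac_kxp := hjac k x p
  rw [hx_kill p hp, hpk, map_zero, zero_add, zero_add] at hjac_kxp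
  exact halt.eq_iff.1 hjac_kxp

theorem apply_mem_isotropyKernel [𝔨.HasOrthogonalProjection] (halt : L.IsAlt)
    (hjac : ∀ x y z : E, L x (L y z) + L y (L z x) + L z (L x y) = 0)
    (had : ∀ x y z : E, ⟪L x y, z⟫ + ⟪y, L x z⟫ = 0) (h𝔨 : ∀ x ∈ 𝔨, ∀ y ∈ 𝔨, L x y ∈ 𝔨)
    (y : E) {x : E} (hx : x ∈ isotropyKernel L 𝔨) : L y x ∈ isotropyKernel L 𝔨 := by
  obtain ⟨k, hk, p, hp, rfl⟩ := Submodule.exists_add_mem_mem_orthogonal (K := 𝔨) y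
  rw [map_add, LinearMap.add_apply, apply_eq_zero_of_mem_orthogonal halt hx hp, add_zero]
  exact apply_mem_isotropyKernel_of_mem halt hjac had h𝔨 hk hx

end IsotropyKernel

/-- For a Lie subalgebra `𝔨 ⊆ 𝔤`, the set
`n = { X ∈ 𝔨 : ⁅X, p⁆ = 0 for all p ∈ 𝔨ᗮ }` (the kernel of the isotropy representation
of the reductive pair `(𝔤, 𝔨)`) is an ideal of `𝔤` contained in `𝔨`. -/
theorem isotropy_kernel_is_ideal
    -- 𝔤 is a real Lie algebra with bracket L …
    (L : 𝔤 →ₗ[ℝ] 𝔤 →ₗ[ℝ] 𝔤)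
    (halt : ∀ x : 𝔤, L x x = 0)
    (hjac : ∀ x y z : 𝔤, L x (L y z) + L y (L z x) + L z (L x y) = 0)
    -- … whose inner product Q is ad-invariant
    (had : ∀ x y z : 𝔤, ⟪L x y, z⟫ + ⟪y, L x z⟫ = 0)
    -- 𝔨 ⊆ 𝔤 is a Lie subalgebra
    (𝔨 : Submodule ℝ 𝔤) (h𝔨 : ∀ x ∈ 𝔨, ∀ y ∈ 𝔨, L x y ∈ 𝔨) :
    -- n is a submodule of 𝔤 contained in 𝔨 which is an ideal: ⁅𝔤, n⁆ ⊆ n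
    ∃ n : Submodule ℝ 𝔤,
      (∀ x : 𝔤, x ∈ n ↔ (x ∈ 𝔨 ∧ ∀ p ∈ 𝔨ᗮ, L x p = 0)) ∧
      n ≤ 𝔨 ∧
      (∀ y : 𝔤, ∀ x ∈ n, L y x ∈ n) :=
  ⟨isotropyKernel L 𝔨, fun _ ↦ mem_isotropyKernel L 𝔨, isotropyKernel_le L 𝔨,
    fun y _ hx ↦ apply_mem_isotropyKernel halt hjac had h𝔨 y hx⟩
end

section
/- Let 𝔥 ⊆ 𝔤 be a Lie subalgebra, m := 𝔥^⊥, and let W_1, …, W_s be pairwise Q-orthogonal subspaces with m = W_1 ⊕ ⋯ ⊕ W_s and ⁅𝔥, W_i⁆ ⊆ W_i for every i. Let 1 ≤ q < s, suppose 𝔨 := 𝔥 ⊕ W_1 ⊕ ⋯ ⊕ W_q is a Lie subalgebra of 𝔤, and suppose Q(⁅W_a, W_i⁆, W_j) = 0 whenever a ≤ q < i, j and i ≠ j. Then ⁅𝔨, W_i⁆ ⊆ W_i for every i > q; i.e. each module W_i with i > q is ad(𝔨)-invariant, so every metric diagonal with respect to this decomposition and ad(𝔨)-invariant on 𝔨^⊥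 is a 𝔨-submersion metric. -/
/-!
By ad-invariance, the orthogonal complement of a subalgebra `𝔨` is an `ad(𝔨)`-module. So for
`x ∈ 𝔨` and `y ∈ W_i` with `i > q`, the bracket `⁅x, y⁆` is orthogonal to `𝔨`, that is, to `𝔥` and
to every `W_j` with `j ≤ q`. It is orthogonal to the other `W_j`, `q < j ≠ i`, by the vanishing
hypothesis for the components of `x` in the `W_a` and by `⁅𝔥, W_i⁆ ⊆ W_i` for its component in `𝔥`.
As `𝔤 = 𝔥 ⊕ W_1 ⊕ ⋯ ⊕ W_s` orthogonally, this forces `⁅x, y⁆ ∈ W_i`.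
-/

open scoped RealInnerProductSpace

variable {𝔤 : Type*} [NormedAddCommGroup 𝔤] [InnerProductSpace ℝ 𝔤] [FiniteDimensional ℝ 𝔤]

open Submodule

section

variable {E : Type*} [NormedAddCommGroup E] [InnerProductSpace ℝ E]

theorem Submodule.apply_apply_mem_orthogonal_of_skew {L : E →ₗ[ℝ] E →ₗ[ℝ] E}
    (had : ∀ x y z : E, ⟪L x y, z⟫ + ⟪y, L x z⟫ = 0) {K : Submodule ℝ E}
    (hK : ∀ x ∈ K, ∀ y ∈ K, L x y ∈ K) {x y : E} (hx : x ∈ K) (hy : y ∈ Kᗮ) :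
    L x y ∈ Kᗮ := by
  refine (mem_orthogonal' _ _).2 fun z hz => ?_
  have hyz : ⟪y, L x z⟫ = 0 := (mem_orthogonal' _ _).1 hy _ (hK x hx z hz)
  linarith [had x y z]

theorem Submodule.mem_of_mem_orthogonal_of_iSup_eq_orthogonal {ι : Type*} {H : Submodule ℝ E}
    [H.HasOrthogonalProjection] {W : ι → Submodule ℝ E} (hW_orth : Pairwise fun i j => W i ⟂ W j)
    (hW_span : ⨆ i, W i = Hᗮ) {i : ι} {v : E} (hvH : v ∈ Hᗮ) (hvW : ∀ j, j ≠ i → v ∈ (W j)ᗮ) :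
    v ∈ W i := by
  set K := H ⊔ ⨆ (j) (_ : j ≠ i), W j
  have hWi : W i ⟂ K := isOrtho_sup_right.2 ⟨(le_iSup W i).trans hW_span.le,
    isOrtho_iSup_right.2 fun j => isOrtho_iSup_right.2 fun hj => hW_orth hj.symm⟩
  have hv : (ℝ ∙ v) ⟂ K := isOrtho_sup_right.2 ⟨(span_singleton_le_iff_mem _ _).2 hvH,
    isOrtho_iSup_right.2 fun j => isOrtho_iSup_right.2 fun hj =>
      (span_singleton_le_iff_mem _ _).2 (hvW j hj)⟩
  have hcodisj : Codisjoint (W i) K := by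
    rw [codisjoint_iff, eq_top_iff, ← sup_orthogonal_of_hasOrthogonalProjection (K := H),
      ← hW_span, iSup_split_single W i]
    exact sup_le (le_sup_left.trans le_sup_right) (sup_le_sup_left le_sup_right _)
  rw [(le_iff_eq_of_codisjoint_of_disjoint hcodisj K.orthogonal_disjoint).1 hWi]
  exact (span_singleton_le_iff_mem _ _).1 hv

end

/-- The modules are indexed by `Fin s`, from zero, so the paper's `a ≤ q` reads `(a : ℕ) < q` and
`i > q` reads `q ≤ (i : ℕ)`. -/
theorem submersion_modules_invariant_general {s : ℕ}
    -- 𝔤 is a real Lie algebra with bracket L …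
    (L : 𝔤 →ₗ[ℝ] 𝔤 →ₗ[ℝ] 𝔤)
    -- … whose inner product Q is ad-invariant
    (had : ∀ x y z : 𝔤, ⟪L x y, z⟫ + ⟪y, L x z⟫ = 0)
    -- 𝔥 ⊆ 𝔤 is a Lie subalgebra, m := 𝔥ᗮ
    (𝔥 : Submodule ℝ 𝔤)
    -- m = W_1 ⊕ ⋯ ⊕ W_s, pairwise Q-orthogonal, with ⁅𝔥, W_i⁆ ⊆ W_i
    (W : Fin s → Submodule ℝ 𝔤)
    (hW_orth : ∀ i j, i ≠ j → ∀ x ∈ W i, ∀ y ∈ W j, ⟪x, y⟫ = 0)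
    (hW_span : (⨆ i, W i) = 𝔥ᗮ)
    (hW_inv : ∀ i, ∀ h ∈ 𝔥, ∀ x ∈ W i, L h x ∈ W i)
    (q : ℕ)
    -- 𝔨 := 𝔥 ⊕ W_1 ⊕ ⋯ ⊕ W_q is a Lie subalgebra of 𝔤
    (h𝔨 : ∀ x ∈ 𝔥 ⊔ ⨆ a : {a : Fin s // (a : ℕ) < q}, W a,
          ∀ y ∈ 𝔥 ⊔ ⨆ a : {a : Fin s // (a : ℕ) < q}, W a,
          L x y ∈ 𝔥 ⊔ ⨆ a : {a : Fin s // (a : ℕ) < q}, W a)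
    -- Q(⁅W_a, W_i⁆, W_j) = 0 whenever a ≤ q < i, j and i ≠ j
    (hvanish : ∀ a i j : Fin s, (a : ℕ) < q → q ≤ (i : ℕ) → q ≤ (j : ℕ) → i ≠ j →
      ∀ x ∈ W a, ∀ y ∈ W i, ∀ z ∈ W j, ⟪L x y, z⟫ = 0) :
    -- then ⁅𝔨, W_i⁆ ⊆ W_i for every i > q
    ∀ i : Fin s, q ≤ (i : ℕ) →
      ∀ x ∈ 𝔥 ⊔ ⨆ a : {a : Fin s // (a : ℕ) < q}, W a,
      ∀ y ∈ W i, L x y ∈ W i := by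
  intro i hi x hx y hy
  set 𝔨 := 𝔥 ⊔ ⨆ a : {a : Fin s // (a : ℕ) < q}, W a
  have hW_isOrtho : Pairwise fun i j => W i ⟂ W j := fun i j hij =>
    isOrtho_iff_inner_eq.2 (hW_orth i j hij)
  have hy𝔨 : y ∈ 𝔨ᗮ := isOrtho_sup_right.2 ⟨(le_iSup W i).trans hW_span.le,
    isOrtho_iSup_right.2 fun a => hW_isOrtho (Fin.ne_of_val_ne (by omega))⟩ hy
  have hxy𝔨 : L x y ∈ 𝔨ᗮ := apply_apply_mem_orthogonal_of_skew had h𝔨 hx hy𝔨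
  refine mem_of_mem_orthogonal_of_iSup_eq_orthogonal hW_isOrtho hW_span
    (orthogonal_le le_sup_left hxy𝔨) fun j hji => ?_
  rcases lt_or_ge (j : ℕ) q with hjq | hqj
  · exact orthogonal_le ((le_iSup (fun a : {a : Fin s // (a : ℕ) < q} => W a) ⟨j, hjq⟩).trans
      le_sup_right) hxy𝔨
  · have h𝔨_le : 𝔨 ≤ (W j)ᗮ.comap (L.flip y) := sup_le
      (fun h hh => hW_isOrtho hji.symm (hW_inv i h hh y hy))
      (iSup_le fun a x' hx' =>
        (mem_orthogonal' _ _).2 (hvanish a i j a.2 hi hqj hji.symm x' hx' y hy))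
    exact h𝔨_le hx

/-- If `𝔨 = 𝔥 ⊕ W_1 ⊕ ⋯ ⊕ W_q` is a Lie subalgebra and
`Q(⁅W_a, W_i⁆, W_j) = 0` whenever `a ≤ q < i, j` with `i ≠ j`, then every module `W_i`
with `i > q` is `ad(𝔨)`-invariant: `⁅𝔨, W_i⁆ ⊆ W_i`.  (Here the modules are indexed by
`Fin s`, zero-based, so "`a ≤ q`" reads `(a : ℕ) < q` and "`i > q`" reads `q ≤ (i : ℕ)`.) -/
theorem submersion_modules_invariant {s : ℕ}
    -- 𝔤 is a real Lie algebra with bracket L …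
    (L : 𝔤 →ₗ[ℝ] 𝔤 →ₗ[ℝ] 𝔤)
    (halt : ∀ x : 𝔤, L x x = 0)
    (hjac : ∀ x y z : 𝔤, L x (L y z) + L y (L z x) + L z (L x y) = 0)
    -- … whose inner product Q is ad-invariant
    (had : ∀ x y z : 𝔤, ⟪L x y, z⟫ + ⟪y, L x z⟫ = 0)
    -- 𝔥 ⊆ 𝔤 is a Lie subalgebra, m := 𝔥ᗮ
    (𝔥 : Submodule ℝ 𝔤) (h𝔥 : ∀ x ∈ 𝔥, ∀ y ∈ 𝔥, L x y ∈ 𝔥)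
    -- m = W_1 ⊕ ⋯ ⊕ W_s, pairwise Q-orthogonal, with ⁅𝔥, W_i⁆ ⊆ W_i
    (W : Fin s → Submodule ℝ 𝔤)
    (hW_le : ∀ i, W i ≤ 𝔥ᗮ)
    (hW_orth : ∀ i j, i ≠ j → ∀ x ∈ W i, ∀ y ∈ W j, ⟪x, y⟫ = 0)
    (hW_span : (⨆ i, W i) = 𝔥ᗮ)
    (hW_inv : ∀ i, ∀ h ∈ 𝔥, ∀ x ∈ W i, L h x ∈ W i)
    -- 1 ≤ q < s
    (q : ℕ) (hq1 : 1 ≤ q) (hqs : q < s)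
    -- 𝔨 := 𝔥 ⊕ W_1 ⊕ ⋯ ⊕ W_q is a Lie subalgebra of 𝔤
    (h𝔨 : ∀ x ∈ 𝔥 ⊔ ⨆ a : {a : Fin s // (a : ℕ) < q}, W a,
          ∀ y ∈ 𝔥 ⊔ ⨆ a : {a : Fin s // (a : ℕ) < q}, W a,
          L x y ∈ 𝔥 ⊔ ⨆ a : {a : Fin s // (a : ℕ) < q}, W a)
    -- Q(⁅W_a, W_i⁆, W_j) = 0 whenever a ≤ q < i, j and i ≠ j
    (hvanish : ∀ a i j : Fin s, (a : ℕ) < q → q ≤ (i : ℕ) → q ≤ (j : ℕ) → i ≠ j →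
      ∀ x ∈ W a, ∀ y ∈ W i, ∀ z ∈ W j, ⟪L x y, z⟫ = 0) :
    -- then ⁅𝔨, W_i⁆ ⊆ W_i for every i > q
    ∀ i : Fin s, q ≤ (i : ℕ) →
      ∀ x ∈ 𝔥 ⊔ ⨆ a : {a : Fin s // (a : ℕ) < q}, W a,
      ∀ y ∈ W i, L x y ∈ W i :=
  submersion_modules_invariant_general L had 𝔥 W hW_orth hW_span hW_inv q h𝔨 hvanish
end

section
/- Suppose v̂₁ := min_{i∈I} v_i < 0 and there exist indices i₀, j₀, k₀ ∈ I and ε > 0 such that [i₀j₀k₀] ≥ ε and v_{i₀} − v_{j₀} − v_{k₀} + v̂₁ ≥ ε. Then scal(t) → −∞ as t → +∞. (The scalar curvature diverges to −∞ along any geodesic ray whose direction is not a submersion direction.) -/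
/-!
Let `v̂₁ = min_i v_i`. For `t ≥ 0` every term of the positive sum is at most a constant times
`e^{-t v̂₁}`, while the single term `[i₀j₀k₀] e^{t(v_{i₀} − v_{j₀} − v_{k₀})}` of the negative sum
is at least `ε e^{t(ε − v̂₁)}`. Since `ε > 0` and `ε − v̂₁ > 0`, the negative exponential has the
strictly larger positive rate and drives `scal(t)` to `−∞`.
-/

open Filter Real

theorem sum_mul_exp_neg_le_of_forall_le {ι : Type*} (s : Finset ι) (c v : ι → ℝ) {m t : ℝ}
    (ht : 0 ≤ t) (hm : ∀ i ∈ s, m ≤ v i) :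
    ∑ i ∈ s, c i * exp (-(t * v i)) ≤ (∑ i ∈ s, |c i|) * exp (-(t * m)) := by
  rw [Finset.sum_mul]
  refine Finset.sum_le_sum fun i hi => ?_
  calc c i * exp (-(t * v i)) ≤ |c i| * exp (-(t * v i)) :=
        mul_le_mul_of_nonneg_right (le_abs_self _) (exp_pos _).le
    _ ≤ |c i| * exp (-(t * m)) :=
        mul_le_mul_of_nonneg_left
          (exp_le_exp.2 (neg_le_neg (mul_le_mul_of_nonneg_left (hm i hi) ht))) (abs_nonneg _)

theorem Fintype.single_le_sum_sum_sum {ι κ μ M : Type*} [Fintype ι] [Fintype κ] [Fintype μ]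
    [AddCommMonoid M] [PartialOrder M] [IsOrderedAddMonoid M]
    {f : ι → κ → μ → M} (hf : ∀ i j k, 0 ≤ f i j k) (i : ι) (j : κ) (k : μ) :
    f i j k ≤ ∑ i, ∑ j, ∑ k, f i j k := by
  have hf₂ : ∀ i j, 0 ≤ ∑ k, f i j k := fun i j => Fintype.sum_nonneg (hf i j)
  calc f i j k ≤ ∑ k, f i j k := Finset.single_le_sum (fun k _ => hf i j k) (Finset.mem_univ k)
    _ ≤ ∑ j, ∑ k, f i j k := Finset.single_le_sum (fun j _ => hf₂ i j) (Finset.mem_univ j)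
    _ ≤ ∑ i, ∑ j, ∑ k, f i j k :=
        Finset.single_le_sum (fun i _ => Fintype.sum_nonneg (hf₂ i)) (Finset.mem_univ i)

theorem tendsto_mul_exp_sub_mul_exp_atBot (C : ℝ) {δ a b : ℝ} (hδ : 0 < δ) (hab : a < b)
    (hb : 0 < b) : Tendsto (fun t => C * exp (a * t) - δ * exp (b * t)) atTop atBot := by
  have hfactor : ∀ t, C * exp (a * t) - δ * exp (b * t)
      = exp (b * t) * (C * exp ((a - b) * t) - δ) := fun t => by
    rw [mul_sub, mul_left_comm, ← exp_add]
    ring_nf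
  have hsmall : Tendsto (fun t => C * exp ((a - b) * t) - δ) atTop (nhds (C * 0 - δ)) :=
    ((tendsto_exp_atBot.comp (tendsto_id.const_mul_atTop_of_neg (sub_neg.2 hab))).const_mul
      C).sub_const δ
  simp_rw [hfactor]
  exact (tendsto_exp_atTop.comp (tendsto_id.const_mul_atTop hb)).atTop_mul_neg
    (by linarith : C * 0 - δ < 0) hsmall

theorem scal_tendsto_atBot_of_not_submersion_direction_general
    {I : Type*} [Fintype I]
    (d b : I → ℝ)
    (T : I → I → I → ℝ) (hT : ∀ i j k, 0 ≤ T i j k)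
    (v : I → ℝ)
    -- v̂₁ := min_i v_i is attained at i₁ and v̂₁ < 0
    (i₁ : I) (hmin : ∀ i, v i₁ ≤ v i) (hneg : v i₁ < 0)
    -- the direction is not a submersion direction
    (i₀ j₀ k₀ : I) (ε : ℝ) (hε : 0 < ε) (hT₀ : ε ≤ T i₀ j₀ k₀)
    (hv₀ : ε ≤ v i₀ - v j₀ - v k₀ + v i₁) :
    Tendsto (fun t : ℝ =>
        (1 / 2) * ∑ i, d i * b i * Real.exp (-(t * v i))
          - (1 / 4) * ∑ i, ∑ j, ∑ k, T i j k * Real.exp (t * (v i - v j - v k)))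
      atTop atBot := by
  set C := ∑ i, |d i * b i|
  refine tendsto_atBot_mono' _ ?_ (tendsto_mul_exp_sub_mul_exp_atBot (C / 2)
    (by positivity : 0 < ε / 4) (by linarith : -v i₁ < ε - v i₁) (by linarith))
  filter_upwards [eventually_ge_atTop 0] with t ht
  have hpos := sum_mul_exp_neg_le_of_forall_le Finset.univ (fun i => d i * b i) v ht
    fun i _ => hmin i
  have hterm : ε * exp ((ε - v i₁) * t) ≤ T i₀ j₀ k₀ * exp (t * (v i₀ - v j₀ - v k₀)) :=
    mul_le_mul hT₀ (exp_le_exp.2 (by nlinarith)) (exp_pos _).le (hε.le.trans hT₀)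
  have hsum := hterm.trans <| Fintype.single_le_sum_sum_sum
    (f := fun i j k => T i j k * exp (t * (v i - v j - v k)))
    (fun i j k => mul_nonneg (hT i j k) (exp_pos _).le) i₀ j₀ k₀
  rw [show -(t * v i₁) = -v i₁ * t by ring] at hpos
  linarith

/-- If `v̂₁ = min_i v_i < 0` and there are indices `i₀, j₀, k₀` and
`ε > 0` with `[i₀j₀k₀] ≥ ε` and `v_{i₀} − v_{j₀} − v_{k₀} + v̂₁ ≥ ε`, then the scalar
curvature `scal(t) = (1/2) Σ_i d_i b_i e^{−t v_i} − (1/4) Σ_{i,j,k} [ijk] e^{t(v_i−v_j−v_k)}`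
tends to `−∞` as `t → +∞`. -/
theorem scal_tendsto_atBot_of_not_submersion_direction
    {I : Type*} [Fintype I] [Nonempty I]
    (d b : I → ℝ) (hd : ∀ i, 0 < d i) (hb : ∀ i, 0 ≤ b i)
    (T : I → I → I → ℝ) (hT : ∀ i j k, 0 ≤ T i j k)
    (hTsymm₁ : ∀ i j k, T i j k = T j i k) (hTsymm₂ : ∀ i j k, T i j k = T i k j)
    (v : I → ℝ)
    -- v̂₁ := min_i v_i is attained at i₁ and v̂₁ < 0
    (i₁ : I) (hmin : ∀ i, v i₁ ≤ v i) (hneg : v i₁ < 0)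
    -- the direction is not a submersion direction
    (i₀ j₀ k₀ : I) (ε : ℝ) (hε : 0 < ε) (hT₀ : ε ≤ T i₀ j₀ k₀)
    (hv₀ : ε ≤ v i₀ - v j₀ - v k₀ + v i₁) :
    Tendsto (fun t : ℝ =>
        (1 / 2) * ∑ i, d i * b i * Real.exp (-(t * v i))
          - (1 / 4) * ∑ i, ∑ j, ∑ k, T i j k * Real.exp (t * (v i - v j - v k)))
      atTop atBot :=
  scal_tendsto_atBot_of_not_submersion_direction_general d b T hT v i₁ hmin hneg i₀ j₀ k₀ ε hε hT₀
    hv₀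
end

section
/- Let I_1, …, I_s be the level sets of the map i ↦ v_i, listed so that v_i = v̂_m for i ∈ I_m with v̂_1 < ⋯ < v̂_s, and assume v̂_1 < 0. Assume that for every i ∈ I_1 and all j, k ∈ I, [ijk] > 0 implies that j and k lie in the same level set I_m. If i₀ ∈ I_1 satisfies 2 d_{i₀} c_{i₀} + (1/2) Σ_{j,k ∈ I_1} [i₀jk] > 0, then ric_{i₀}(t) → +∞ as t → +∞. (The Ricci curvature blows up along a submersion direction associated to a non-toral subalgebra.) -/
open Filter Finset Real

/-!
Since `v i₀ = v̂₁`, the level condition makes every term of the middle sum of `ric_{i₀}`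
carry the same exponential `e^{-t v̂₁}`, and the relation `d b = 2 d c + Σ [i₀jk]` turns the
first two terms into exactly `c_{i₀} e^{-t v̂₁}`. In the last sum, the terms with `j, k ∈ I_1`
are again multiples of `e^{-t v̂₁}` and the others are nonnegative. Hence
`ric_{i₀}(t) ≥ (2 d c + ½ Σ_{I_1 × I_1} [i₀jk]) / (2 d) · e^{-t v̂₁}`, which tends to `+∞`
because `v̂₁ < 0`.
-/

section

variable {I : Type*} [Fintype I]

noncomputable def ricciEigenvalue (d b : I → ℝ) (T : I → I → I → ℝ) (v : I → ℝ) (i : I)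
    (t : ℝ) : ℝ :=
  (b i / 2) * exp (-(t * v i))
    - (1 / (2 * d i)) * ∑ j, ∑ k, T i j k * exp (t * (v k - v i - v j))
    + (1 / (4 * d i)) * ∑ j, ∑ k, T i j k * exp (t * (v i - v j - v k))

lemma sum_mul_exp_eq_of_level (T : I → I → ℝ) (v : I → ℝ) (a t : ℝ)
    (hlevel : ∀ j k, T j k ≠ 0 → v j = v k) :
    ∑ j, ∑ k, T j k * exp (t * (v k - a - v j)) = (∑ j, ∑ k, T j k) * exp (-(t * a)) := by
  simp only [sum_mul]
  refine sum_congr rfl fun j _ => sum_congr rfl fun k _ => ?_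
  by_cases hjk : T j k = 0
  · simp [hjk]
  · rw [hlevel j k hjk]
    ring_nf

lemma sum_level_mul_exp_le (T : I → I → ℝ) (hT : ∀ j k, 0 ≤ T j k) (v : I → ℝ) (a t : ℝ) :
    (∑ j ∈ univ.filter (fun j => v j = a), ∑ k ∈ univ.filter (fun k => v k = a), T j k)
        * exp (-(t * a))
      ≤ ∑ j, ∑ k, T j k * exp (t * (a - v j - v k)) := by
  have hterm : ∀ j k, 0 ≤ T j k * exp (t * (a - v j - v k)) :=
    fun j k => mul_nonneg (hT j k) (exp_pos _).le
  calc (∑ j ∈ univ.filter (fun j => v j = a), ∑ k ∈ univ.filter (fun k => v k = a), T j k)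
        * exp (-(t * a))
      = ∑ j ∈ univ.filter (fun j => v j = a), ∑ k ∈ univ.filter (fun k => v k = a),
          T j k * exp (t * (a - v j - v k)) := by
        simp only [sum_mul]
        refine sum_congr rfl fun j hj => sum_congr rfl fun k hk => ?_
        rw [(mem_filter.1 hj).2, (mem_filter.1 hk).2]
        ring_nf
    _ ≤ ∑ j ∈ univ.filter (fun j => v j = a), ∑ k, T j k * exp (t * (a - v j - v k)) :=
        sum_le_sum fun j _ => sum_le_univ_sum_of_nonneg (hterm j)
    _ ≤ ∑ j, ∑ k, T j k * exp (t * (a - v j - v k)) :=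
        sum_le_univ_sum_of_nonneg fun j => sum_nonneg fun k _ => hterm j k

lemma ricciEigenvalue_ge_mul_exp (d b c : I → ℝ) (T : I → I → I → ℝ) (v : I → ℝ) (i : I)
    (hd : 0 < d i) (hT : ∀ j k, 0 ≤ T i j k)
    (hdbc : d i * b i = 2 * d i * c i + ∑ j, ∑ k, T i j k)
    (hlevel : ∀ j k, T i j k ≠ 0 → v j = v k) (t : ℝ) :
    (2 * d i * c i + (1 / 2) * ∑ j ∈ univ.filter (fun j => v j = v i),
        ∑ k ∈ univ.filter (fun k => v k = v i), T i j k) / (2 * d i) * exp (-(t * v i))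
      ≤ ricciEigenvalue d b T v i t := by
  have hsecond := sum_mul_exp_eq_of_level (T i) v (v i) t hlevel
  have hthird := sum_level_mul_exp_le (T i) hT v (v i) t
  have hfirst : b i / 2 - 1 / (2 * d i) * ∑ j, ∑ k, T i j k = c i := by
    field_simp
    linear_combination hdbc
  unfold ricciEigenvalue
  rw [hsecond]
  have hE := exp_pos (-(t * v i))
  have hd4 : 0 ≤ 1 / (4 * d i) := by positivity
  calc _ = (b i / 2 - 1 / (2 * d i) * ∑ j, ∑ k, T i j k) * exp (-(t * v i))
        + 1 / (4 * d i) * ((∑ j ∈ univ.filter (fun j => v j = v i),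
          ∑ k ∈ univ.filter (fun k => v k = v i), T i j k) * exp (-(t * v i))) := by
        rw [hfirst]
        field_simp
        ring
    _ ≤ _ := by
        have := mul_le_mul_of_nonneg_left hthird hd4
        linarith

lemma tendsto_const_mul_exp_neg_mul_atTop {C a : ℝ} (hC : 0 < C) (ha : a < 0) :
    Tendsto (fun t : ℝ => C * exp (-(t * a))) atTop atTop := by
  have hexp : Tendsto (fun t : ℝ => exp (-(t * a))) atTop atTop :=
    tendsto_exp_atTop.comp (tendsto_neg_atBot_atTop.comp (tendsto_id.atTop_mul_const_of_neg ha))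
  exact hexp.const_mul_atTop hC

end

theorem ricci_blowup_along_nontoral_submersion_direction_general
    {I : Type*} [Fintype I]
    (d b c : I → ℝ) (hd : ∀ i, 0 < d i)
    (T : I → I → I → ℝ) (hT : ∀ i j k, 0 ≤ T i j k)
    -- the relation d_i b_i = 2 d_i c_i + Σ_{j,k} [ijk]
    (hdbc : ∀ i, d i * b i = 2 * d i * c i + ∑ j, ∑ k, T i j k)
    (v : I → ℝ)
    -- v̂₁ := min_i v_i is attained at i₁ and v̂₁ < 0
    (i₁ : I) (hneg : v i₁ < 0)
    -- for i ∈ I_1, [ijk] > 0 forces j, k to lie in the same level set of v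
    (hlevel : ∀ i j k, v i = v i₁ → 0 < T i j k → v j = v k)
    -- i₀ ∈ I_1 with 2 d_{i₀} c_{i₀} + (1/2) Σ_{j,k ∈ I_1} [i₀jk] > 0
    (i₀ : I) (hi₀ : v i₀ = v i₁)
    (hpos : 0 < 2 * d i₀ * c i₀ +
      (1 / 2) * ∑ j ∈ Finset.univ.filter (fun j => v j = v i₁),
        ∑ k ∈ Finset.univ.filter (fun k => v k = v i₁), T i₀ j k) :
    Tendsto (fun t : ℝ =>
        (b i₀ / 2) * Real.exp (-(t * v i₀))
          - (1 / (2 * d i₀)) * ∑ j, ∑ k, T i₀ j k * Real.exp (t * (v k - v i₀ - v j))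
          + (1 / (4 * d i₀)) * ∑ j, ∑ k, T i₀ j k * Real.exp (t * (v i₀ - v j - v k)))
      atTop atTop := by
  rw [← hi₀] at hpos hneg
  have hlevel₀ : ∀ j k, T i₀ j k ≠ 0 → v j = v k :=
    fun j k hjk => hlevel i₀ j k hi₀ ((hT i₀ j k).lt_of_ne' hjk)
  have hC := div_pos hpos (mul_pos two_pos (hd i₀))
  exact tendsto_atTop_mono
    (ricciEigenvalue_ge_mul_exp d b c T v i₀ (hd i₀) (hT i₀) (hdbc i₀) hlevel₀)
    (tendsto_const_mul_exp_neg_mul_atTop hC hneg)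

/-- Suppose `v̂₁ = min_i v_i < 0` and that for every `i` in the lowest
level set `I_1 = {i : v_i = v̂₁}`, `[ijk] > 0` implies that `j` and `k` lie in the same
level set of `v`.  If `i₀ ∈ I_1` satisfies `2 d_{i₀} c_{i₀} + (1/2) Σ_{j,k∈I_1} [i₀jk] > 0`,
then `ric_{i₀}(t) → +∞` as `t → +∞`, where
`ric_i(t) = (b_i/2) e^{−t v_i} − (1/(2d_i)) Σ_{j,k} [ijk] e^{t(v_k−v_i−v_j)}
  + (1/(4d_i)) Σ_{j,k} [ijk] e^{t(v_i−v_j−v_k)}`. -/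
theorem ricci_blowup_along_nontoral_submersion_direction
    {I : Type*} [Fintype I] [Nonempty I]
    (d b c : I → ℝ) (hd : ∀ i, 0 < d i) (hb : ∀ i, 0 ≤ b i) (hc : ∀ i, 0 ≤ c i)
    (T : I → I → I → ℝ) (hT : ∀ i j k, 0 ≤ T i j k)
    (hTsymm₁ : ∀ i j k, T i j k = T j i k) (hTsymm₂ : ∀ i j k, T i j k = T i k j)
    -- the relation d_i b_i = 2 d_i c_i + Σ_{j,k} [ijk]
    (hdbc : ∀ i, d i * b i = 2 * d i * c i + ∑ j, ∑ k, T i j k)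
    (v : I → ℝ)
    -- v̂₁ := min_i v_i is attained at i₁ and v̂₁ < 0
    (i₁ : I) (hmin : ∀ i, v i₁ ≤ v i) (hneg : v i₁ < 0)
    -- for i ∈ I_1, [ijk] > 0 forces j, k to lie in the same level set of v
    (hlevel : ∀ i j k, v i = v i₁ → 0 < T i j k → v j = v k)
    -- i₀ ∈ I_1 with 2 d_{i₀} c_{i₀} + (1/2) Σ_{j,k ∈ I_1} [i₀jk] > 0
    (i₀ : I) (hi₀ : v i₀ = v i₁)
    (hpos : 0 < 2 * d i₀ * c i₀ +
      (1 / 2) * ∑ j ∈ Finset.univ.filter (fun j => v j = v i₁),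
        ∑ k ∈ Finset.univ.filter (fun k => v k = v i₁), T i₀ j k) :
    Tendsto (fun t : ℝ =>
        (b i₀ / 2) * Real.exp (-(t * v i₀))
          - (1 / (2 * d i₀)) * ∑ j, ∑ k, T i₀ j k * Real.exp (t * (v k - v i₀ - v j))
          + (1 / (4 * d i₀)) * ∑ j, ∑ k, T i₀ j k * Real.exp (t * (v i₀ - v j - v k)))
      atTop atTop :=
  ricci_blowup_along_nontoral_submersion_direction_general d b c hd T hT hdbc v i₁ hneg hlevel i₀
    hi₀ hpos
end

section
/- Suppose v̂₁ := min_{i∈I} v_i < 0. If K ≥ 0 and t > 0 satisfy scal(t) ≥ −K, then Σ_{i,j,k∈I} [ijk] e^{t(v_i − v_j − v_k + v̂₁)} ≤ 2 Σ_{i∈I} d_i b_i + 4K. -/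
/-! Multiplying the lower bound `scal(t) ≥ -K`, rewritten as
`Σ [ijk] e^{t(v_i - v_j - v_k)} ≤ 4K + 2 Σ d_i b_i e^{-t v_i}`, by `e^{t v̂₁} ≤ 1` absorbs every
factor `e^{-t v_i} ≤ e^{-t v̂₁}` of the Killing term, leaving `2 Σ d_i b_i + 4K`. -/

open Finset Real

theorem exp_mul_sum_mul_exp_neg_le_sum {ι : Type*} (s : Finset ι) (w u : ι → ℝ) (c : ℝ)
    (hw : ∀ i ∈ s, 0 ≤ w i) (hc : ∀ i ∈ s, c ≤ u i) :
    exp c * ∑ i ∈ s, w i * exp (-u i) ≤ ∑ i ∈ s, w i := by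
  rw [mul_sum]
  refine sum_le_sum fun i hi => ?_
  calc exp c * (w i * exp (-u i)) = w i * exp (c - u i) := by
        rw [sub_eq_add_neg, exp_add]; ring
    _ ≤ w i * 1 := by
        gcongr
        · exact hw i hi
        · exact exp_le_one_iff.2 (sub_nonpos.2 (hc i hi))
    _ = w i := mul_one _

theorem sum_mul_exp_mul_add {ι : Type*} [Fintype ι] (T : ι → ι → ι → ℝ) (x : ι → ι → ι → ℝ)
    (t c : ℝ) :
    ∑ i, ∑ j, ∑ k, T i j k * exp (t * (x i j k + c))
      = exp (t * c) * ∑ i, ∑ j, ∑ k, T i j k * exp (t * x i j k) := by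
  simp only [mul_sum, mul_add, exp_add]
  congr! 3 with i _ j _ k _
  ring

theorem bracket_sum_bound_of_scal_bounded_below_general
    {I : Type*} [Fintype I]
    (d b : I → ℝ) (hd : ∀ i, 0 < d i) (hb : ∀ i, 0 ≤ b i)
    (T : I → I → I → ℝ)
    (v : I → ℝ)
    -- v̂₁ := min_i v_i is attained at i₁ and v̂₁ < 0
    (i₁ : I) (hmin : ∀ i, v i₁ ≤ v i) (hneg : v i₁ < 0)
    (K : ℝ) (hK : 0 ≤ K) (t : ℝ) (ht : 0 < t)
    -- scal(t) ≥ −K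
    (hscal : -K ≤ (1 / 2) * ∑ i, d i * b i * Real.exp (-(t * v i))
        - (1 / 4) * ∑ i, ∑ j, ∑ k, T i j k * Real.exp (t * (v i - v j - v k))) :
    ∑ i, ∑ j, ∑ k, T i j k * Real.exp (t * (v i - v j - v k + v i₁))
      ≤ 2 * (∑ i, d i * b i) + 4 * K := by
  rw [sum_mul_exp_mul_add T (fun i j k => v i - v j - v k)]
  set E := exp (t * v i₁)
  have hE : E ≤ 1 := exp_le_one_iff.2 (mul_nonpos_of_nonneg_of_nonpos ht.le hneg.le)
  have hKilling : E * ∑ i, d i * b i * exp (-(t * v i)) ≤ ∑ i, d i * b i :=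
    exp_mul_sum_mul_exp_neg_le_sum _ _ _ _ (fun i _ => mul_nonneg (hd i).le (hb i))
      fun i _ => mul_le_mul_of_nonneg_left (hmin i) ht.le
  calc E * ∑ i, ∑ j, ∑ k, T i j k * exp (t * (v i - v j - v k))
      ≤ E * (4 * K + 2 * ∑ i, d i * b i * exp (-(t * v i))) :=
        mul_le_mul_of_nonneg_left (by linarith) (exp_pos _).le
    _ = 4 * K * E + 2 * (E * ∑ i, d i * b i * exp (-(t * v i))) := by ring
    _ ≤ 4 * K * 1 + 2 * ∑ i, d i * b i := by gcongr
    _ = 2 * (∑ i, d i * b i) + 4 * K := by ring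

/-- Suppose `v̂₁ = min_i v_i < 0`.  If `K ≥ 0` and `t > 0` satisfy
`scal(t) ≥ −K`, then `Σ_{i,j,k} [ijk] e^{t(v_i − v_j − v_k + v̂₁)} ≤ 2 Σ_i d_i b_i + 4K`. -/
theorem bracket_sum_bound_of_scal_bounded_below
    {I : Type*} [Fintype I] [Nonempty I]
    (d b : I → ℝ) (hd : ∀ i, 0 < d i) (hb : ∀ i, 0 ≤ b i)
    (T : I → I → I → ℝ) (hT : ∀ i j k, 0 ≤ T i j k)
    (hTsymm₁ : ∀ i j k, T i j k = T j i k) (hTsymm₂ : ∀ i j k, T i j k = T i k j)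
    (v : I → ℝ)
    -- v̂₁ := min_i v_i is attained at i₁ and v̂₁ < 0
    (i₁ : I) (hmin : ∀ i, v i₁ ≤ v i) (hneg : v i₁ < 0)
    (K : ℝ) (hK : 0 ≤ K) (t : ℝ) (ht : 0 < t)
    -- scal(t) ≥ −K
    (hscal : -K ≤ (1 / 2) * ∑ i, d i * b i * Real.exp (-(t * v i))
        - (1 / 4) * ∑ i, ∑ j, ∑ k, T i j k * Real.exp (t * (v i - v j - v k))) :
    ∑ i, ∑ j, ∑ k, T i j k * Real.exp (t * (v i - v j - v k + v i₁))
      ≤ 2 * (∑ i, d i * b i) + 4 * K :=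
  bracket_sum_bound_of_scal_bounded_below_general d b hd hb T v i₁ hmin hneg K hK t ht hscal
end

section
/- Assume v_1 ≤ v_2 ≤ ⋯ ≤ v_ℓ and let 1 ≤ r < ℓ. Suppose: (i) d_i b_i = Σ_{j,k∈I} [ijk] for every i ≤ r (torality of the subalgebra spanned by the first r modules); (ii) there is C > 0 such that Σ_{j,k ≤ r} [ijk] ≤ C · Σ_{j ≤ r < k} [ijk] for every i ≤ r; (iii) there is ε > 0 such that v_k − v_j > ε whenever j ≤ r < k. Then for every t > 0 with e^{tε} ≥ 2C + 4 the restricted scalar curvature estimate holds: scal(t) ≤ (1/2) Σ_{i > r} d_i b_i e^{−t v_i} − (1/4) Σ_{i,j,k > r} [ijk] e^{t(v_i − v_j − v_k)}. -/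
/-!
Let `s` be the low block (the first `r` modules). `scal` exceeds its restriction to the complement
of `s` by `(1/2) Σ_{i∈s} d_i b_i e^{-t v_i}` minus a quarter of the nonnegative triple-sum terms
with some index in `s`. By torality, `d_i b_i` for `i ∈ s` splits into the constants `[ijk]` with
`j, k` both low, one low and one high, or both high. The last kind is absorbed by the terms with
`i` high and exactly one of `j, k` low, using `e^x + e^{-x} ≥ 2`. By (ii) the first kind is at most
`C` times the second, and both are absorbed by the terms with `i` high and `j, k` low, which carry
the factor `e^{tε} ≥ 2C + 4` thanks to the gap (iii).
-/

open Finset Real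

section

variable {ι : Type*}

theorem sum_sum_le_sum_sum_mul_exp_sub (s : Finset ι) (f : ι → ι → ℝ) (hf : ∀ i k, 0 ≤ f i k)
    (hsymm : ∀ i k, f i k = f k i) (g : ι → ℝ) :
    ∑ i ∈ s, ∑ k ∈ s, f i k ≤ ∑ i ∈ s, ∑ k ∈ s, f i k * exp (g i - g k) := by
  have hswap : ∑ i ∈ s, ∑ k ∈ s, f i k * exp (g k - g i)
      = ∑ i ∈ s, ∑ k ∈ s, f i k * exp (g i - g k) := by
    rw [sum_comm]
    exact sum_congr rfl fun i _ => sum_congr rfl fun k _ => by rw [hsymm]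
  have hterm (i k : ι) : 2 * f i k ≤ f i k * exp (g i - g k) + f i k * exp (g k - g i) := by
    have h := one_le_cosh (g i - g k)
    rw [cosh_eq, neg_sub] at h
    nlinarith [hf i k]
  have h2 : 2 * ∑ i ∈ s, ∑ k ∈ s, f i k ≤ 2 * ∑ i ∈ s, ∑ k ∈ s, f i k * exp (g i - g k) := by
    calc 2 * ∑ i ∈ s, ∑ k ∈ s, f i k = ∑ i ∈ s, ∑ k ∈ s, 2 * f i k := by simp only [mul_sum]
      _ ≤ ∑ i ∈ s, ∑ k ∈ s, (f i k * exp (g i - g k) + f i k * exp (g k - g i)) :=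
          sum_le_sum fun i _ => sum_le_sum fun k _ => hterm i k
      _ = 2 * ∑ i ∈ s, ∑ k ∈ s, f i k * exp (g i - g k) := by
          simp only [sum_add_distrib, hswap]; ring
  linarith

theorem exp_mul_sum_le_sum_of_gap (T : ι → ι → ι → ℝ) (hT : ∀ i j k, 0 ≤ T i j k)
    (hT₁ : ∀ i j k, T i j k = T j i k) (hT₂ : ∀ i j k, T i j k = T i k j)
    (v : ι → ℝ) (s u : Finset ι) (ε : ℝ) (hgap : ∀ j ∈ s, ∀ k ∈ u, ε < v k - v j)
    (t : ℝ) (ht : 0 ≤ t) :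
    exp (t * ε) * ∑ j ∈ s, (∑ k ∈ s, ∑ i ∈ u, T j k i) * exp (-(t * v j))
      ≤ ∑ i ∈ u, ∑ j ∈ s, ∑ k ∈ s, T i j k * exp (t * (v i - v j - v k)) := by
  have hreorder : ∑ i ∈ u, ∑ j ∈ s, ∑ k ∈ s, T i j k * exp (t * (v i - v j - v k))
      = ∑ j ∈ s, ∑ k ∈ s, ∑ i ∈ u, T i j k * exp (t * (v i - v j - v k)) := by
    rw [sum_comm]
    exact sum_congr rfl fun _ _ => sum_comm
  rw [hreorder, mul_sum]
  refine sum_le_sum fun j hj => ?_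
  rw [sum_mul, mul_sum]
  refine sum_le_sum fun k hk => ?_
  rw [sum_mul, mul_sum]
  refine sum_le_sum fun i hi => ?_
  have hexponent : t * ε + -(t * v j) ≤ t * (v i - v j - v k) := by
    nlinarith [hgap k hk i hi]
  rw [mul_left_comm, ← exp_add, (hT₂ j k i).trans (hT₁ j i k)]
  exact mul_le_mul_of_nonneg_left (exp_le_exp.mpr hexponent) (hT i j k)

theorem sum_mul_exp_le_sum_mixed (T : ι → ι → ι → ℝ) (hT : ∀ i j k, 0 ≤ T i j k)
    (hT₁ : ∀ i j k, T i j k = T j i k) (hT₂ : ∀ i j k, T i j k = T i k j)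
    (v : ι → ℝ) (s u : Finset ι) (t : ℝ) :
    ∑ j ∈ s, (∑ i ∈ u, ∑ k ∈ u, T j i k) * exp (-(t * v j))
      ≤ ∑ i ∈ u, ∑ j ∈ s, ∑ k ∈ u, T i j k * exp (t * (v i - v j - v k)) := by
  rw [sum_comm]
  refine sum_le_sum fun j _ => ?_
  have hfactor : ∑ i ∈ u, ∑ k ∈ u, T i j k * exp (t * (v i - v j - v k))
      = (∑ i ∈ u, ∑ k ∈ u, T i j k * exp (t * v i - t * v k)) * exp (-(t * v j)) := by
    simp only [sum_mul, mul_assoc, ← exp_add]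
    exact sum_congr rfl fun i _ => sum_congr rfl fun k _ => by ring_nf
  have hpair := sum_sum_le_sum_sum_mul_exp_sub u (fun i k => T i j k) (fun i k => hT i j k)
    (fun i k => (hT₁ i j k).trans ((hT₂ j i k).trans (hT₁ j k i))) (fun i => t * v i)
  rw [hfactor]
  refine mul_le_mul_of_nonneg_right (le_of_eq_of_le ?_ hpair) (exp_pos _).le
  exact sum_congr rfl fun i _ => sum_congr rfl fun k _ => hT₁ j i k

variable [Fintype ι] [DecidableEq ι]

theorem sum_sum_eq_blocks (s : Finset ι) (F : ι → ι → ℝ) :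
    ∑ j, ∑ k, F j k = ∑ j ∈ s, ∑ k ∈ s, F j k + ∑ j ∈ s, ∑ k ∈ sᶜ, F j k
      + ∑ j ∈ sᶜ, ∑ k ∈ s, F j k + ∑ j ∈ sᶜ, ∑ k ∈ sᶜ, F j k := by
  simp only [← sum_add_sum_compl s, sum_add_distrib]
  ring

theorem sum_sum_eq_blocks_of_symm (s : Finset ι) (F : ι → ι → ℝ) (hF : ∀ j k, F j k = F k j) :
    ∑ j, ∑ k, F j k = ∑ j ∈ s, ∑ k ∈ s, F j k + 2 * ∑ j ∈ s, ∑ k ∈ sᶜ, F j k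
      + ∑ j ∈ sᶜ, ∑ k ∈ sᶜ, F j k := by
  have hmixed : ∑ j ∈ sᶜ, ∑ k ∈ s, F j k = ∑ j ∈ s, ∑ k ∈ sᶜ, F j k := by
    rw [sum_comm]
    exact sum_congr rfl fun j _ => sum_congr rfl fun k _ => hF k j
  rw [sum_sum_eq_blocks s, hmixed]
  ring

/-- `scalOn d b T v t univ` is `scal(t)`; on a smaller `s`, the same formula with every index
restricted to `s`. -/
noncomputable def scalOn (d b : ι → ℝ) (T : ι → ι → ι → ℝ) (v : ι → ℝ) (t : ℝ) (s : Finset ι) :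
    ℝ :=
  (1 / 2) * ∑ i ∈ s, d i * b i * exp (-(t * v i))
    - (1 / 4) * ∑ i ∈ s, ∑ j ∈ s, ∑ k ∈ s, T i j k * exp (t * (v i - v j - v k))

theorem sum_compl_blocks_le_sum (s : Finset ι) (E : ι → ι → ι → ℝ) (hE : ∀ i j k, 0 ≤ E i j k) :
    ∑ i ∈ sᶜ, ∑ j ∈ s, ∑ k ∈ s, E i j k + ∑ i ∈ sᶜ, ∑ j ∈ s, ∑ k ∈ sᶜ, E i j k
      + ∑ i ∈ sᶜ, ∑ j ∈ sᶜ, ∑ k ∈ s, E i j k + ∑ i ∈ sᶜ, ∑ j ∈ sᶜ, ∑ k ∈ sᶜ, E i j k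
      ≤ ∑ i, ∑ j, ∑ k, E i j k := by
  have hsub : ∑ i ∈ sᶜ, ∑ j, ∑ k, E i j k ≤ ∑ i, ∑ j, ∑ k, E i j k :=
    sum_le_sum_of_subset_of_nonneg (subset_univ _) fun i _ _ =>
      sum_nonneg fun j _ => sum_nonneg fun k _ => hE i j k
  rwa [sum_congr rfl fun i _ => sum_sum_eq_blocks s (E i), sum_add_distrib, sum_add_distrib,
    sum_add_distrib] at hsub

theorem scalOn_univ_le_scalOn_compl (d b : ι → ℝ) (T : ι → ι → ι → ℝ) (hT : ∀ i j k, 0 ≤ T i j k)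
    (hT₁ : ∀ i j k, T i j k = T j i k) (hT₂ : ∀ i j k, T i j k = T i k j)
    (v : ι → ℝ) (s : Finset ι) (htoral : ∀ i ∈ s, d i * b i = ∑ j, ∑ k, T i j k)
    (C : ℝ) (hC : ∀ i ∈ s, ∑ j ∈ s, ∑ k ∈ s, T i j k ≤ C * ∑ j ∈ s, ∑ k ∈ sᶜ, T i j k)
    (ε : ℝ) (hgap : ∀ j ∈ s, ∀ k ∈ sᶜ, ε < v k - v j)
    (t : ℝ) (ht : 0 ≤ t) (hexp : 2 * C + 4 ≤ exp (t * ε)) :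
    scalOn d b T v t univ ≤ scalOn d b T v t sᶜ := by
  set x : ι → ℝ := fun i => exp (-(t * v i))
  set E : ι → ι → ι → ℝ := fun i j k => T i j k * exp (t * (v i - v j - v k))
  set S := ∑ i ∈ s, (∑ j ∈ s, ∑ k ∈ s, T i j k) * x i
  set W := ∑ i ∈ s, (∑ j ∈ s, ∑ k ∈ sᶜ, T i j k) * x i
  set A := ∑ i ∈ s, (∑ j ∈ sᶜ, ∑ k ∈ sᶜ, T i j k) * x i
  have hdb : ∑ i ∈ s, d i * b i * x i = S + 2 * W + A := by
    simp only [S, W, A, ← sum_add_distrib, mul_sum]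
    refine sum_congr rfl fun i hi => ?_
    rw [htoral i hi, sum_sum_eq_blocks_of_symm s _ (hT₂ i)]
    ring
  have hS : S ≤ C * W := by
    rw [mul_sum]
    exact sum_le_sum fun i hi => by
      rw [← mul_assoc]
      exact mul_le_mul_of_nonneg_right (hC i hi) (exp_pos _).le
  have hW : 0 ≤ W := sum_nonneg fun i _ =>
    mul_nonneg (sum_nonneg fun _ _ => sum_nonneg fun _ _ => hT _ _ _) (exp_pos _).le
  have hlow := exp_mul_sum_le_sum_of_gap T hT hT₁ hT₂ v s sᶜ ε hgap t ht
  have hmixed := sum_mul_exp_le_sum_mixed T hT hT₁ hT₂ v s sᶜ t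
  have hmixed_swap : ∑ i ∈ sᶜ, ∑ j ∈ sᶜ, ∑ k ∈ s, E i j k = ∑ i ∈ sᶜ, ∑ j ∈ s, ∑ k ∈ sᶜ, E i j k :=
    sum_congr rfl fun i _ => by
      rw [sum_comm]
      exact sum_congr rfl fun j _ => sum_congr rfl fun k _ => by
        simp only [E, hT₂ i k j]; ring_nf
  have htriple := sum_compl_blocks_le_sum s E fun i j k => mul_nonneg (hT i j k) (exp_pos _).le
  have hgapW : (2 * C + 4) * W ≤ exp (t * ε) * W := mul_le_mul_of_nonneg_right hexp hW
  unfold scalOn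
  rw [← sum_add_sum_compl s, hdb]
  linarith

end

theorem restricted_scal_estimate_general {ℓ : ℕ}
    (d b : Fin ℓ → ℝ)
    (T : Fin ℓ → Fin ℓ → Fin ℓ → ℝ) (hT : ∀ i j k, 0 ≤ T i j k)
    (hTsymm₁ : ∀ i j k, T i j k = T j i k) (hTsymm₂ : ∀ i j k, T i j k = T i k j)
    (v : Fin ℓ → ℝ)
    (r : ℕ)
    -- (i) torality of the subalgebra spanned by the first r modules
    (htoral : ∀ i : Fin ℓ, (i : ℕ) < r → d i * b i = ∑ j, ∑ k, T i j k)
    -- (ii) the crucial estimate with constant C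
    (C : ℝ)
    (hCineq : ∀ i : Fin ℓ, (i : ℕ) < r →
      ∑ j ∈ Finset.univ.filter (fun j : Fin ℓ => (j : ℕ) < r),
        ∑ k ∈ Finset.univ.filter (fun k : Fin ℓ => (k : ℕ) < r), T i j k
      ≤ C * ∑ j ∈ Finset.univ.filter (fun j : Fin ℓ => (j : ℕ) < r),
            ∑ k ∈ Finset.univ.filter (fun k : Fin ℓ => r ≤ (k : ℕ)), T i j k)
    -- (iii) the eigenvalue gap
    (ε : ℝ)
    (hgap : ∀ j k : Fin ℓ, (j : ℕ) < r → r ≤ (k : ℕ) → ε < v k - v j) :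
    ∀ t : ℝ, 0 < t → 2 * C + 4 ≤ Real.exp (t * ε) →
      (1 / 2) * ∑ i, d i * b i * Real.exp (-(t * v i))
        - (1 / 4) * ∑ i, ∑ j, ∑ k, T i j k * Real.exp (t * (v i - v j - v k))
      ≤ (1 / 2) * ∑ i ∈ Finset.univ.filter (fun i : Fin ℓ => r ≤ (i : ℕ)),
            d i * b i * Real.exp (-(t * v i))
        - (1 / 4) * ∑ i ∈ Finset.univ.filter (fun i : Fin ℓ => r ≤ (i : ℕ)),
            ∑ j ∈ Finset.univ.filter (fun j : Fin ℓ => r ≤ (j : ℕ)),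
              ∑ k ∈ Finset.univ.filter (fun k : Fin ℓ => r ≤ (k : ℕ)),
                T i j k * Real.exp (t * (v i - v j - v k)) := by
  intro t ht hexp
  set low := univ.filter fun i : Fin ℓ => (i : ℕ) < r
  have hhigh : univ.filter (fun i : Fin ℓ => r ≤ (i : ℕ)) = lowᶜ := by ext; simp [low]
  rw [hhigh] at hCineq ⊢
  exact scalOn_univ_le_scalOn_compl d b T hT hTsymm₁ hTsymm₂ v low
    (fun i hi => htoral i (mem_filter.mp hi).2) C (fun i hi => hCineq i (mem_filter.mp hi).2) ε
    (fun j hj k hk => hgap j k (mem_filter.mp hj).2 (by simpa [low] using hk)) t ht.le hexp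

/-- (Böhm's estimate, Proposition on restricted scalar curvature.)
Assume `v_1 ≤ ⋯ ≤ v_ℓ` and let `1 ≤ r < ℓ` (modules are indexed by `Fin ℓ`, zero-based,
so the first `r` modules are those `i` with `(i : ℕ) < r`).  Suppose (i) torality:
`d_i b_i = Σ_{j,k} [ijk]` for every `i` among the first `r` modules; (ii) there is
`C > 0` with `Σ_{j,k ≤ r} [ijk] ≤ C Σ_{j ≤ r < k} [ijk]` for those `i`; (iii) there is
`ε > 0` with `v_k − v_j > ε` whenever `j ≤ r < k`.  Then for every `t > 0` with
`e^{tε} ≥ 2C + 4`,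
`scal(t) ≤ (1/2) Σ_{i>r} d_i b_i e^{−t v_i} − (1/4) Σ_{i,j,k>r} [ijk] e^{t(v_i−v_j−v_k)}`. -/
theorem restricted_scal_estimate {ℓ : ℕ}
    (d b : Fin ℓ → ℝ) (hd : ∀ i, 0 < d i) (hb : ∀ i, 0 ≤ b i)
    (T : Fin ℓ → Fin ℓ → Fin ℓ → ℝ) (hT : ∀ i j k, 0 ≤ T i j k)
    (hTsymm₁ : ∀ i j k, T i j k = T j i k) (hTsymm₂ : ∀ i j k, T i j k = T i k j)
    (v : Fin ℓ → ℝ) (hv : Monotone v)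
    (r : ℕ) (hr1 : 1 ≤ r) (hrℓ : r < ℓ)
    -- (i) torality of the subalgebra spanned by the first r modules
    (htoral : ∀ i : Fin ℓ, (i : ℕ) < r → d i * b i = ∑ j, ∑ k, T i j k)
    -- (ii) the crucial estimate with constant C
    (C : ℝ) (hC : 0 < C)
    (hCineq : ∀ i : Fin ℓ, (i : ℕ) < r →
      ∑ j ∈ Finset.univ.filter (fun j : Fin ℓ => (j : ℕ) < r),
        ∑ k ∈ Finset.univ.filter (fun k : Fin ℓ => (k : ℕ) < r), T i j k
      ≤ C * ∑ j ∈ Finset.univ.filter (fun j : Fin ℓ => (j : ℕ) < r),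
            ∑ k ∈ Finset.univ.filter (fun k : Fin ℓ => r ≤ (k : ℕ)), T i j k)
    -- (iii) the eigenvalue gap
    (ε : ℝ) (hε : 0 < ε)
    (hgap : ∀ j k : Fin ℓ, (j : ℕ) < r → r ≤ (k : ℕ) → ε < v k - v j) :
    ∀ t : ℝ, 0 < t → 2 * C + 4 ≤ Real.exp (t * ε) →
      (1 / 2) * ∑ i, d i * b i * Real.exp (-(t * v i))
        - (1 / 4) * ∑ i, ∑ j, ∑ k, T i j k * Real.exp (t * (v i - v j - v k))
      ≤ (1 / 2) * ∑ i ∈ Finset.univ.filter (fun i : Fin ℓ => r ≤ (i : ℕ)),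
            d i * b i * Real.exp (-(t * v i))
        - (1 / 4) * ∑ i ∈ Finset.univ.filter (fun i : Fin ℓ => r ≤ (i : ℕ)),
            ∑ j ∈ Finset.univ.filter (fun j : Fin ℓ => r ≤ (j : ℕ)),
              ∑ k ∈ Finset.univ.filter (fun k : Fin ℓ => r ≤ (k : ℕ)),
                T i j k * Real.exp (t * (v i - v j - v k)) :=
  restricted_scal_estimate_general d b T hT hTsymm₁ hTsymm₂ v r htoral C hCineq ε hgap
end

section
/- Let I = {1, …, ℓ} and d_i > 0 for i ∈ I. For each n ∈ ℕ let λ_i^{(n)} ≥ 1, b_i^{(n)} ≥ 0, c_i^{(n)} ≥ 0 and [ijk]^{(n)} ≥ 0 (invariant under permutations of the three indices) be real numbers such that the sequences (b_i^{(n)})_n, (c_i^{(n)})_n and ([ijk]^{(n)})_n are bounded. Define ric_i^{(n)} := b_i^{(n)}/(2 λ_i^{(n)}) − (1/(2 d_i)) Σ_{j,k∈I} [ijk]^{(n)} λ_k^{(n)}/(λ_i^{(n)} λ_j^{(n)}) + (1/(4 d_i)) Σ_{j,k∈I} [ijk]^{(n)} λ_i^{(n)}/(λ_j^{(n)} λ_k^{(n)})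 (the Ricci eigenvalues of a sequence of invariant metrics normalized so that the most shrinking eigenvalue equals 1). If for every i ∈ I the sequence (ric_i^{(n)})_n is bounded, then the sequence Σ_{i∈I} d_i c_i^{(n)}/λ_i^{(n)} + Σ_{i,j,k∈I} [ijk]^{(n)} λ_k^{(n)}/(λ_i^{(n)} λ_j^{(n)}) is bounded; i.e. the sequence of metrics is algebraically non-collapsed. -/
/-!
Summing `d_i ric_i` gives the scalar curvature. By the permutation symmetry of `[ijk]`, the
two bracket sums in the Ricci formula both equal `S = Σ [ijk] λ_k/(λ_iλ_j)`, so
`Σ d_i ric_i = Σ d_i b_i/(2λ_i) - S/4`. As `λ_i ≥ 1`, the first sum is bounded by the bounds on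
the `b_i`, and the lower bounds on the `ric_i` then bound `S` from above; the Casimir term
`Σ d_i c_i/λ_i` is bounded directly.
-/

open Finset

namespace HomogeneousRicci

variable {I : Type*} [Fintype I]

/-- The Ricci eigenvalue `ric_i` of the diagonal metric with eigenvalues `lam` on the modules of
dimensions `d`, with Killing coefficients `b` and structure constants `T i j k = [ijk]`. -/
noncomputable def ricci (d lam b : I → ℝ) (T : I → I → I → ℝ) (i : I) : ℝ :=
  b i / (2 * lam i) - (1 / (2 * d i)) * ∑ j, ∑ k, T i j k * (lam k / (lam i * lam j))
    + (1 / (4 * d i)) * ∑ j, ∑ k, T i j k * (lam i / (lam j * lam k))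

/-- The structure-constant part `Σ [ijk] λ_k/(λ_iλ_j)` of the squared norm of the bracket. -/
noncomputable def bracketSum (lam : I → ℝ) (T : I → I → I → ℝ) : ℝ :=
  ∑ i, ∑ j, ∑ k, T i j k * (lam k / (lam i * lam j))

omit [Fintype I] in
theorem swap_first_last {T : I → I → I → ℝ} (hT₁ : ∀ i j k, T i j k = T j i k)
    (hT₂ : ∀ i j k, T i j k = T i k j) (i j k : I) : T i j k = T k j i := by
  rw [hT₁, hT₂, hT₁]

theorem sum_sum_sum_comm_first_last {M : Type*} [AddCommMonoid M] (f : I → I → I → M) :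
    ∑ i, ∑ j, ∑ k, f i j k = ∑ k, ∑ j, ∑ i, f i j k :=
  calc ∑ i, ∑ j, ∑ k, f i j k
      = ∑ i, ∑ k, ∑ j, f i j k := sum_congr rfl fun _ _ => sum_comm
    _ = ∑ k, ∑ i, ∑ j, f i j k := sum_comm
    _ = ∑ k, ∑ j, ∑ i, f i j k := sum_congr rfl fun _ _ => sum_comm

theorem sum_mul_comp_swap_first_last {T : I → I → I → ℝ} (hT : ∀ i j k, T i j k = T k j i)
    (g : I → I → I → ℝ) :
    ∑ i, ∑ j, ∑ k, T i j k * g k j i = ∑ i, ∑ j, ∑ k, T i j k * g i j k := by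
  rw [sum_sum_sum_comm_first_last]
  exact sum_congr rfl fun k _ => sum_congr rfl fun j _ => sum_congr rfl fun i _ => by rw [hT]

theorem sum_mul_div_eq_bracketSum (lam : I → ℝ) {T : I → I → I → ℝ}
    (hT : ∀ i j k, T i j k = T k j i) :
    ∑ i, ∑ j, ∑ k, T i j k * (lam i / (lam j * lam k)) = bracketSum lam T := by
  rw [bracketSum, ← sum_mul_comp_swap_first_last hT fun i j k => lam k / (lam i * lam j)]
  simp only [mul_comm (lam _) (lam _)]

theorem sum_mul_ricci {d : I → ℝ} (hd : ∀ i, d i ≠ 0) (lam b : I → ℝ) {T : I → I → I → ℝ}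
    (hT : ∀ i j k, T i j k = T k j i) :
    ∑ i, d i * ricci d lam b T i = ∑ i, d i * (b i / (2 * lam i)) - bracketSum lam T / 4 := by
  have hterm : ∀ i, d i * ricci d lam b T i = d i * (b i / (2 * lam i))
      - (1 / 2) * ∑ j, ∑ k, T i j k * (lam k / (lam i * lam j))
      + (1 / 4) * ∑ j, ∑ k, T i j k * (lam i / (lam j * lam k)) := fun i => by
    rw [ricci]
    field_simp [hd i]
  simp only [hterm, sum_add_distrib, sum_sub_distrib, ← mul_sum, sum_mul_div_eq_bracketSum lam hT]
  rw [bracketSum]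
  ring

theorem bracketSum_le {d lam b B R : I → ℝ} {T : I → I → I → ℝ} (hd : ∀ i, 0 < d i)
    (hlam : ∀ i, 1 ≤ lam i) (hb0 : ∀ i, 0 ≤ b i) (hb : ∀ i, b i ≤ B i)
    (hT : ∀ i j k, T i j k = T k j i) (hric : ∀ i, -R i ≤ ricci d lam b T i) :
    bracketSum lam T ≤ 2 * ∑ i, d i * B i + 4 * ∑ i, d i * R i := by
  have hscal := sum_mul_ricci (fun i => (hd i).ne') lam b hT
  have hkilling : ∑ i, d i * (b i / (2 * lam i)) ≤ (∑ i, d i * B i) / 2 := by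
    rw [sum_div]
    refine sum_le_sum fun i _ => ?_
    rw [mul_div_assoc]
    refine mul_le_mul_of_nonneg_left ?_ (hd i).le
    calc b i / (2 * lam i) ≤ b i / 2 :=
          div_le_div_of_nonneg_left (hb0 i) two_pos (by linarith [hlam i])
      _ ≤ B i / 2 := by linarith [hb i]
  have hricci : -∑ i, d i * R i ≤ ∑ i, d i * ricci d lam b T i := by
    rw [← sum_neg_distrib]
    exact sum_le_sum fun i _ => by
      simpa only [mul_neg] using mul_le_mul_of_nonneg_left (hric i) (hd i).le
  linarith

end HomogeneousRicci

open HomogeneousRicci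

theorem bounded_ricci_implies_noncollapse_general
    {I : Type*} [Fintype I]
    (d : I → ℝ) (hd : ∀ i, 0 < d i)
    (lam : ℕ → I → ℝ) (hlam : ∀ n i, 1 ≤ lam n i)
    (b : ℕ → I → ℝ) (hb0 : ∀ n i, 0 ≤ b n i) (hb_bdd : ∀ i, ∃ B : ℝ, ∀ n, b n i ≤ B)
    (c : ℕ → I → ℝ) (hc0 : ∀ n i, 0 ≤ c n i) (hc_bdd : ∀ i, ∃ B : ℝ, ∀ n, c n i ≤ B)
    (T : ℕ → I → I → I → ℝ)
    (hTsymm₁ : ∀ n i j k, T n i j k = T n j i k)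
    (hTsymm₂ : ∀ n i j k, T n i j k = T n i k j)
    -- the Ricci eigenvalues are bounded
    (hric : ∀ i, ∃ R : ℝ, ∀ n,
      |b n i / (2 * lam n i)
        - (1 / (2 * d i)) * ∑ j, ∑ k, T n i j k * (lam n k / (lam n i * lam n j))
        + (1 / (4 * d i)) * ∑ j, ∑ k, T n i j k * (lam n i / (lam n j * lam n k))| ≤ R) :
    -- then the norm of the bracket is bounded: algebraic non-collapse
    ∃ M : ℝ, ∀ n,
      (∑ i, d i * c n i / lam n i)
        + ∑ i, ∑ j, ∑ k, T n i j k * (lam n k / (lam n i * lam n j)) ≤ M := by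
  choose B hB using hb_bdd
  choose C hC using hc_bdd
  choose R hR using hric
  refine ⟨∑ i, d i * C i + (2 * ∑ i, d i * B i + 4 * ∑ i, d i * R i), fun n => add_le_add ?_ ?_⟩
  · exact sum_le_sum fun i _ => (div_le_self (mul_nonneg (hd i).le (hc0 n i)) (hlam n i)).trans
      (mul_le_mul_of_nonneg_left (hC i n) (hd i).le)
  · exact bracketSum_le hd (hlam n) (hb0 n) (fun i => hB i n)
      (swap_first_last (hTsymm₁ n) (hTsymm₂ n)) fun i => neg_le_of_abs_le (hR i n)

/-- (Bounded Ricci implies algebraic non-collapse, normalized version.)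
Given, for each `n`, eigenvalues `λ_i⁽ⁿ⁾ ≥ 1` and bounded nonnegative data `b_i⁽ⁿ⁾`,
`c_i⁽ⁿ⁾`, `[ijk]⁽ⁿ⁾` (the latter invariant under permutations of the indices), define
`ric_i⁽ⁿ⁾ = b_i⁽ⁿ⁾/(2λ_i⁽ⁿ⁾) − (1/(2d_i)) Σ_{j,k} [ijk]⁽ⁿ⁾ λ_k⁽ⁿ⁾/(λ_i⁽ⁿ⁾λ_j⁽ⁿ⁾)
  + (1/(4d_i)) Σ_{j,k} [ijk]⁽ⁿ⁾ λ_i⁽ⁿ⁾/(λ_j⁽ⁿ⁾λ_k⁽ⁿ⁾)`.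
If every sequence `(ric_i⁽ⁿ⁾)_n` is bounded, then the sequence
`Σ_i d_i c_i⁽ⁿ⁾/λ_i⁽ⁿ⁾ + Σ_{i,j,k} [ijk]⁽ⁿ⁾ λ_k⁽ⁿ⁾/(λ_i⁽ⁿ⁾λ_j⁽ⁿ⁾)` is bounded, i.e. the
sequence of metrics is algebraically non-collapsed. -/
theorem bounded_ricci_implies_noncollapse
    {I : Type*} [Fintype I]
    (d : I → ℝ) (hd : ∀ i, 0 < d i)
    (lam : ℕ → I → ℝ) (hlam : ∀ n i, 1 ≤ lam n i)
    (b : ℕ → I → ℝ) (hb0 : ∀ n i, 0 ≤ b n i) (hb_bdd : ∀ i, ∃ B : ℝ, ∀ n, b n i ≤ B)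
    (c : ℕ → I → ℝ) (hc0 : ∀ n i, 0 ≤ c n i) (hc_bdd : ∀ i, ∃ B : ℝ, ∀ n, c n i ≤ B)
    (T : ℕ → I → I → I → ℝ) (hT0 : ∀ n i j k, 0 ≤ T n i j k)
    (hT_bdd : ∀ i j k, ∃ B : ℝ, ∀ n, T n i j k ≤ B)
    (hTsymm₁ : ∀ n i j k, T n i j k = T n j i k)
    (hTsymm₂ : ∀ n i j k, T n i j k = T n i k j)
    -- the Ricci eigenvalues are bounded
    (hric : ∀ i, ∃ R : ℝ, ∀ n,
      |b n i / (2 * lam n i)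
        - (1 / (2 * d i)) * ∑ j, ∑ k, T n i j k * (lam n k / (lam n i * lam n j))
        + (1 / (4 * d i)) * ∑ j, ∑ k, T n i j k * (lam n i / (lam n j * lam n k))| ≤ R) :
    -- then the norm of the bracket is bounded: algebraic non-collapse
    ∃ M : ℝ, ∀ n,
      (∑ i, d i * c n i / lam n i)
        + ∑ i, ∑ j, ∑ k, T n i j k * (lam n k / (lam n i * lam n j)) ≤ M :=
  bounded_ricci_implies_noncollapse_general d hd lam hlam b hb0 hb_bdd c hc0 hc_bdd T hTsymm₁
    hTsymm₂ hric
end
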